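/- arXiv:2307.06886 — 6 statements merged into one kernel-verified Lean document; each statement's English description precedes it below -/
import Mathlib

section
/- For the delayed gradient descent-ascent iteration z_{k+1} = z_k − αΦ(z_{k−τ_k}), where Φ is 2L-Lipschitz, ‖Φ‖ ≤ G everywhere (via gradient bound G), and delays satisfy τ_k ≤ τ_max, the delay-induced error e_k = Φ(z_k) − Φ(z_{k−τ_k}) satisfies ‖e_k‖ ≤ 2αLGτ_max for every k. -/
lemma DGDA_dist_aux {Z : Type*} [NormedAddCommGroup Z] [InnerProductSpace ℝ Z]
    (Φ : Z → Z) (G : ℝ) (hΦbdd : ∀ z, ‖Φ z‖ ≤ G)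
    (α : ℝ) (hα : 0 < α) (τ : ℕ → ℕ) (z : ℕ → Z)
    (hstep : ∀ k, z (k + 1) = z k - α • Φ (z (k - τ k))) :
    ∀ d m, ‖z (m + d) - z m‖ ≤ d * (α * G) := by
  intro d
  induction d with
  | zero => intro m; simp
  | succ n ih =>
    intro m
    have h := hstep (m + n)
    have : z (m + (n + 1)) - z m = (z (m + n) - z m) - α • Φ (z (m + n - τ (m + n))) := by
      rw [show m + (n + 1) = (m + n) + 1 from rfl, h]; abel
    rw [this]
    calc ‖(z (m + n) - z m) - α • Φ (z (m + n - τ (m + n)))‖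
        ≤ ‖z (m + n) - z m‖ + ‖α • Φ (z (m + n - τ (m + n)))‖ := norm_sub_le _ _
      _ ≤ n * (α * G) + α * G := by
          refine add_le_add (ih m) ?_
          rw [norm_smul, Real.norm_eq_abs, abs_of_pos hα]
          exact mul_le_mul_of_nonneg_left (hΦbdd _) hα.le
      _ = ((n + 1 : ℕ) : ℝ) * (α * G) := by push_cast; ring

/-- Lemma 5: delay-induced error bound for delayed gradient
descent-ascent `z_{k+1} = z_k − αΦ(z_{k−τ_k})` with `Φ` `2L`-Lipschitz and
uniformly bounded by `G`: `‖e_k‖ ≤ 2αLGτmax`. -/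
theorem DGDA_delay_error_bound
    {Z : Type*} [NormedAddCommGroup Z] [InnerProductSpace ℝ Z]
    (Φ : Z → Z) (L G : ℝ) (hLpos : 0 < L) (hGpos : 0 < G)
    (hΦLip : ∀ z zhat, ‖Φ z - Φ zhat‖ ≤ 2 * L * ‖z - zhat‖)
    (hΦbdd : ∀ z, ‖Φ z‖ ≤ G)
    (α : ℝ) (hα : 0 < α)
    (τ : ℕ → ℕ) (τmax : ℕ) (hτmax : 1 ≤ τmax) (hτ : ∀ k, τ k ≤ τmax)
    (z : ℕ → Z)
    (hstep : ∀ k, z (k + 1) = z k - α • Φ (z (k - τ k))) :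
    ∀ k, ‖Φ (z k) - Φ (z (k - τ k))‖ ≤ 2 * α * L * G * τmax := by
  intro k
  set m := k - τ k with hm
  have hmk : m ≤ k := Nat.sub_le _ _
  have hd : k - m ≤ τmax := by
    have := hτ k
    omega
  have hk : m + (k - m) = k := Nat.add_sub_cancel' hmk
  have h1 : ‖z k - z m‖ ≤ (k - m : ℕ) * (α * G) := by
    have := DGDA_dist_aux Φ G hΦbdd α hα τ z hstep (k - m) m
    rwa [hk] at this
  have h2 : ((k - m : ℕ) : ℝ) * (α * G) ≤ (τmax : ℝ) * (α * G) := by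
    apply mul_le_mul_of_nonneg_right _ (by positivity)
    exact_mod_cast hd
  calc ‖Φ (z k) - Φ (z m)‖ ≤ 2 * L * ‖z k - z m‖ := hΦLip _ _
    _ ≤ 2 * L * ((τmax : ℝ) * (α * G)) := by
        apply mul_le_mul_of_nonneg_left (h1.trans h2) (by positivity)
    _ = 2 * α * L * G * τmax := by ring
end

section
/- Consider delayed gradient descent-ascent z_{k+1} = z_k − αΦ(z_{k−τ_k}) for a convex-concave f on ℝ^m × ℝ^n with gradient bound G > 1 and Lipschitz constant L > 1, delays bounded by τ_max, and saddle point z*. If α ≤ 1/(2√(LGτ_max T)), then for all k ∈ [T]: ‖z_k − z*‖² ≤ 10B, where B = max{‖z_1 − z*‖², G}. -/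
/-!
The saddle operator `Φ = (∇ₓ f, -∇ᵧ f)` is monotone at the saddle point `z*` (first-order
convexity in `x`, concavity in `y`), bounded by `√2 G` and `2L`-Lipschitz. Expanding
`‖z_{k+1} - z*‖²`, monotonicity at the current iterate `z_k` absorbs the gradient term, and only the
staleness error `Φ(z_{k-τ_k}) - Φ(z_k)` remains; it is at most `2L · τ_max α √2 G` because each
step moves the iterate by at most `α √2 G`. Hence every step increases `‖z_k - z*‖²` by at most
`4√2 α² L G τ_max ‖z_k - z*‖ + 2 α² G²`, which the step-size condition keeps below `5B/T` as long as
`‖z_k - z*‖² ≤ 10B`; over `T` steps the squared distance thus stays below `B + 5B`.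
-/

open Real

section FirstOrderConvexity

variable {E : Type*} [NormedAddCommGroup E] [NormedSpace ℝ E] {φ : E → ℝ} {φ' : E →L[ℝ] ℝ}
  {x : E}

theorem ConvexOn.apply_sub_le_of_hasFDerivAt (hφ : ConvexOn ℝ Set.univ φ)
    (hd : HasFDerivAt φ φ' x) (y : E) : φ' (y - x) ≤ φ y - φ x := by
  let ℓ : ℝ →ᵃ[ℝ] E := AffineMap.lineMap x y
  have hℓ : HasDerivAt ℓ (y - x) 0 := AffineMap.hasDerivAt_lineMap
  have hdℓ : HasDerivAt (φ ∘ ℓ) (φ' (y - x)) 0 := by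
    refine HasFDerivAt.comp_hasDerivAt 0 ?_ hℓ
    simpa [ℓ] using hd
  simpa [ℓ, slope_def_field] using
    (hφ.comp_affineMap ℓ).le_slope_of_hasDerivAt (Set.mem_univ 0) (Set.mem_univ 1) one_pos hdℓ

theorem ConcaveOn.sub_le_apply_of_hasFDerivAt (hφ : ConcaveOn ℝ Set.univ φ)
    (hd : HasFDerivAt φ φ' x) (y : E) : φ y - φ x ≤ φ' (y - x) := by
  have := hφ.neg.apply_sub_le_of_hasFDerivAt hd.neg y
  simp only [neg_apply, Pi.neg_apply] at this
  linarith

end FirstOrderConvexity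

local notation "⟪" x ", " y "⟫" => @inner ℝ _ _ x y


section SaddleOperator

variable {E F : Type*}

def saddleOperator [Neg F] (gx : E → F → E) (gy : E → F → F) (w : WithLp 2 (E × F)) :
    WithLp 2 (E × F) :=
  WithLp.toLp 2 (gx w.fst w.snd, -gy w.fst w.snd)

variable {gx : E → F → E} {gy : E → F → F}

@[simp] theorem saddleOperator_fst [Neg F] (w : WithLp 2 (E × F)) :
    (saddleOperator gx gy w).fst = gx w.fst w.snd := rfl

@[simp] theorem saddleOperator_snd [Neg F] (w : WithLp 2 (E × F)) :
    (saddleOperator gx gy w).snd = -gy w.fst w.snd := rfl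

variable [NormedAddCommGroup E] [NormedAddCommGroup F]

theorem norm_saddleOperator_le {G : ℝ} (hGx : ∀ x y, ‖gx x y‖ ≤ G) (hGy : ∀ x y, ‖gy x y‖ ≤ G)
    (w : WithLp 2 (E × F)) : ‖saddleOperator gx gy w‖ ≤ √2 * G := by
  have hG : 0 ≤ G := (norm_nonneg _).trans (hGx w.fst w.snd)
  rw [WithLp.prod_norm_eq_of_L2, saddleOperator_fst, saddleOperator_snd, norm_neg,
    show √2 * G = √(G ^ 2 + G ^ 2) by rw [← two_mul, sqrt_mul zero_le_two, sqrt_sq hG]]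
  gcongr
  exacts [hGx _ _, hGy _ _]

theorem norm_saddleOperator_sub_le {L : ℝ} (hL : 0 ≤ L)
    (hLx : ∀ x₁ y₁ x₂ y₂, ‖gx x₁ y₁ - gx x₂ y₂‖ ≤ L * (‖x₁ - x₂‖ + ‖y₁ - y₂‖))
    (hLy : ∀ x₁ y₁ x₂ y₂, ‖gy x₁ y₁ - gy x₂ y₂‖ ≤ L * (‖x₁ - x₂‖ + ‖y₁ - y₂‖))
    (w w' : WithLp 2 (E × F)) :
    ‖saddleOperator gx gy w - saddleOperator gx gy w'‖ ≤ 2 * L * ‖w - w'‖ := by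
  set a := ‖w.fst - w'.fst‖
  set b := ‖w.snd - w'.snd‖
  have hx := hLx w.fst w.snd w'.fst w'.snd
  have hy := hLy w.fst w.snd w'.fst w'.snd
  rw [WithLp.prod_norm_eq_of_L2, WithLp.prod_norm_eq_of_L2, WithLp.sub_fst, WithLp.sub_snd,
    WithLp.sub_fst, WithLp.sub_snd, saddleOperator_fst, saddleOperator_fst, saddleOperator_snd,
    saddleOperator_snd, neg_sub_neg, norm_sub_rev (gy _ _)]
  calc √(‖gx w.fst w.snd - gx w'.fst w'.snd‖ ^ 2 + ‖gy w.fst w.snd - gy w'.fst w'.snd‖ ^ 2)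
      ≤ √((L * (a + b)) ^ 2 + (L * (a + b)) ^ 2) := by gcongr
    _ ≤ √((2 * L) ^ 2 * (a ^ 2 + b ^ 2)) := by gcongr; nlinarith [sq_nonneg (L * (a - b))]
    _ = 2 * L * √(a ^ 2 + b ^ 2) := by rw [sqrt_mul' _ (by positivity), sqrt_sq (by positivity)]

variable [InnerProductSpace ℝ E] [InnerProductSpace ℝ F] [CompleteSpace E] [CompleteSpace F]

theorem inner_saddleOperator_sub_nonneg {f : E → F → ℝ} {xs : E} {ys : F} (w : WithLp 2 (E × F))
    (hgx : HasGradientAt (fun x => f x w.snd) (gx w.fst w.snd) w.fst)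
    (hgy : HasGradientAt (fun y => f w.fst y) (gy w.fst w.snd) w.snd)
    (hconv : ConvexOn ℝ Set.univ (fun x => f x w.snd))
    (hconc : ConcaveOn ℝ Set.univ (fun y => f w.fst y))
    (hxs : f xs w.snd ≤ f xs ys) (hys : f xs ys ≤ f w.fst ys) :
    0 ≤ ⟪saddleOperator gx gy w, w - WithLp.toLp 2 (xs, ys)⟫ := by
  have h₁ := hconv.apply_sub_le_of_hasFDerivAt hgx.hasFDerivAt xs
  have h₂ := hconc.sub_le_apply_of_hasFDerivAt hgy.hasFDerivAt ys
  simp only [InnerProductSpace.toDual_apply_apply] at h₁ h₂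
  rw [WithLp.prod_inner_apply]
  change 0 ≤ ⟪(saddleOperator gx gy w).fst, w.fst - xs⟫ + ⟪(saddleOperator gx gy w).snd, w.snd - ys⟫
  rw [saddleOperator_fst, saddleOperator_snd, inner_neg_left]
  simp only [inner_sub_right] at h₁ h₂ ⊢
  linarith

end SaddleOperator

theorem norm_sub_le_mul_of_norm_succ_sub_le {E : Type*} [SeminormedAddCommGroup E] {z : ℕ → E}
    {c : ℝ} {i j : ℕ} (hij : i ≤ j) (h : ∀ k ∈ Finset.Ico i j, ‖z (k + 1) - z k‖ ≤ c) :
    ‖z j - z i‖ ≤ (j - i : ℕ) * c := by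
  calc ‖z j - z i‖ = dist (z i) (z j) := by rw [dist_comm, dist_eq_norm]
    _ ≤ ∑ k ∈ Finset.Ico i j, dist (z k) (z (k + 1)) := dist_le_Ico_sum_dist z hij
    _ ≤ (Finset.Ico i j).card • c :=
        Finset.sum_le_card_nsmul _ _ _ fun k hk => by rw [dist_comm, dist_eq_norm]; exact h k hk
    _ = (j - i : ℕ) * c := by rw [Nat.card_Ico, nsmul_eq_mul]

section DelayedIteration

variable {E : Type*} [NormedAddCommGroup E] [InnerProductSpace ℝ E]

theorem norm_sub_smul_sub_sq_le {u p q zs : E} {α : ℝ} (hα : 0 ≤ α) (hq : 0 ≤ ⟪q, u - zs⟫) :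
    ‖u - α • p - zs‖ ^ 2 ≤ ‖u - zs‖ ^ 2 + 2 * α * ‖p - q‖ * ‖u - zs‖ + α ^ 2 * ‖p‖ ^ 2 := by
  have hexp : ‖u - α • p - zs‖ ^ 2 = ‖u - zs‖ ^ 2 - 2 * α * ⟪p, u - zs⟫ + α ^ 2 * ‖p‖ ^ 2 := by
    rw [show u - α • p - zs = (u - zs) - α • p by abel, norm_sub_sq_real, real_inner_smul_right,
      norm_smul, Real.norm_eq_abs, mul_pow, sq_abs, real_inner_comm]
    ring
  have hpq : -⟪p - q, u - zs⟫ ≤ ‖p - q‖ * ‖u - zs‖ :=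
    (neg_le_abs _).trans (abs_real_inner_le_norm _ _)
  rw [hexp]
  rw [inner_sub_left] at hpq
  nlinarith

variable {Φ : E → E} {z : ℕ → E} {s : ℕ → ℕ} {α M : ℝ} {τ : ℕ}

theorem norm_sub_stale_iterate_le (hα : 0 ≤ α) (hM : ∀ w, ‖Φ w‖ ≤ M)
    (hstep : ∀ k, 1 ≤ k → z (k + 1) = z k - α • Φ (z (s k)))
    (hs : ∀ k, 1 ≤ k → 1 ≤ s k ∧ s k ≤ k ∧ k ≤ s k + τ) {k : ℕ} (hk : 1 ≤ k) :
    ‖z k - z (s k)‖ ≤ τ * (α * M) := by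
  obtain ⟨hs1, hsk, hkτ⟩ := hs k hk
  have hαM : 0 ≤ α * M := mul_nonneg hα ((norm_nonneg _).trans (hM (z 0)))
  calc ‖z k - z (s k)‖ ≤ (k - s k : ℕ) * (α * M) := by
        refine norm_sub_le_mul_of_norm_succ_sub_le hsk fun j hj => ?_
        rw [hstep j (by simp at hj; omega), sub_sub_cancel_left, norm_neg, norm_smul,
          Real.norm_of_nonneg hα]
        exact mul_le_mul_of_nonneg_left (hM _) hα
    _ ≤ τ * (α * M) := by gcongr; omega

theorem norm_delayed_succ_sub_sq_le {zs : E} {K : ℝ} (hα : 0 ≤ α)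
    (hmono : ∀ w, 0 ≤ ⟪Φ w, w - zs⟫) (hM : ∀ w, ‖Φ w‖ ≤ M) (hK : 0 ≤ K)
    (hlip : ∀ w w', ‖Φ w - Φ w'‖ ≤ K * ‖w - w'‖)
    (hstep : ∀ k, 1 ≤ k → z (k + 1) = z k - α • Φ (z (s k)))
    (hs : ∀ k, 1 ≤ k → 1 ≤ s k ∧ s k ≤ k ∧ k ≤ s k + τ) {k : ℕ} (hk : 1 ≤ k) :
    ‖z (k + 1) - zs‖ ^ 2 ≤
      ‖z k - zs‖ ^ 2 + 2 * α * (K * (τ * (α * M))) * ‖z k - zs‖ + α ^ 2 * M ^ 2 := by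
  have hstale : ‖Φ (z (s k)) - Φ (z k)‖ ≤ K * (τ * (α * M)) := by
    calc ‖Φ (z (s k)) - Φ (z k)‖ ≤ K * ‖z (s k) - z k‖ := hlip _ _
      _ ≤ K * (τ * (α * M)) := by
        rw [norm_sub_rev]; gcongr; exact norm_sub_stale_iterate_le hα hM hstep hs hk
  rw [hstep k hk]
  refine (norm_sub_smul_sub_sq_le hα (hmono (z k))).trans ?_
  gcongr
  exact hM _

end DelayedIteration

theorem forall_mem_Icc_le_of_succ_le_add {u : ℕ → ℝ} {C D : ℝ} {T : ℕ} (hD : 0 ≤ D)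
    (h1 : u 1 + T * D ≤ C) (hstep : ∀ k, 1 ≤ k → u k ≤ C → u (k + 1) ≤ u k + D) :
    ∀ k ∈ Finset.Icc 1 T, u k ≤ C := by
  have hgrowth : ∀ j ≤ T, u (j + 1) ≤ u 1 + j * D := by
    intro j
    induction j with
    | zero => simp
    | succ j ih =>
      intro hj
      have hjT : (j : ℝ) ≤ T := by exact_mod_cast (Nat.le_of_succ_le hj)
      have hj' := ih (Nat.le_of_succ_le hj)
      have := hstep (j + 1) (by omega) (by nlinarith)
      push_cast
      linarith
  intro k hk
  obtain ⟨hk1, hkT⟩ := Finset.mem_Icc.mp hk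
  obtain ⟨j, rfl⟩ : ∃ j, k = j + 1 := ⟨k - 1, by omega⟩
  have hjT : (j : ℝ) ≤ T := by exact_mod_cast (by omega : j ≤ T)
  nlinarith [hgrowth j (by omega)]

theorem sq_mul_le_of_le_one_div_two_sqrt {α A : ℝ} (hα0 : 0 < α) (hα : α ≤ 1 / (2 * √A)) :
    0 < A ∧ α ^ 2 * A ≤ 1 / 4 := by
  -- for `A ≤ 0` the bound reads `α ≤ 1 / 0 = 0`
  have hA : 0 < A := by
    by_contra! hA
    rw [sqrt_eq_zero'.mpr hA, mul_zero, div_zero] at hα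
    linarith
  refine ⟨hA, ?_⟩
  have h : α * (2 * √A) ≤ 1 := (le_div_iff₀ (by positivity)).mp hα
  have hsq : (α * (2 * √A)) ^ 2 = 4 * (α ^ 2 * A) := by
    rw [mul_pow, mul_pow, sq_sqrt hA.le]; ring
  nlinarith [mul_pos hα0 (by positivity : 0 < 2 * √A)]

theorem dgda_increment_le {L G B α r τ T : ℝ} (hL : 1 < L) (hG : 1 < G) (hGB : G ≤ B)
    (hτ : 1 ≤ τ) (hT : 0 < T) (hα : α ^ 2 * (L * G * τ * T) ≤ 1 / 4) (hr : 0 ≤ r)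
    (hr2 : r ^ 2 ≤ 10 * B) :
    2 * α * (2 * L * (τ * (α * (√2 * G)))) * r + α ^ 2 * (√2 * G) ^ 2 ≤ 5 * B / T := by
  have hsqrt2 : √2 ^ 2 = 2 := sq_sqrt zero_le_two
  -- `20 B ≤ (9/2)² B²` because `B ≥ 1`
  have hr' : √2 * r ≤ 9 / 2 * B := by
    rw [← pow_le_pow_iff_left₀ (by positivity) (by linarith) two_ne_zero, mul_pow, hsqrt2]
    nlinarith
  have hGT : α ^ 2 * G * T ≤ 1 / 4 := by
    have : α ^ 2 * G * T * 1 ≤ α ^ 2 * G * T * (L * τ) := by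
      gcongr; nlinarith
    nlinarith
  rw [le_div_iff₀ hT]
  have e : (2 * α * (2 * L * (τ * (α * (√2 * G)))) * r + α ^ 2 * (√2 * G) ^ 2) * T =
      4 * (α ^ 2 * (L * G * τ * T)) * (√2 * r) + 2 * G * (α ^ 2 * G * T) := by
    rw [mul_pow, hsqrt2]; ring
  have h₁ : 4 * (α ^ 2 * (L * G * τ * T)) * (√2 * r) ≤ 4 * (1 / 4) * (√2 * r) := by gcongr
  have h₂ : 2 * G * (α ^ 2 * G * T) ≤ 2 * G * (1 / 4) := by gcongr
  linarith

theorem DGDA_bounded_iterates_general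
    {m n : ℕ}
    (f : EuclideanSpace ℝ (Fin m) → EuclideanSpace ℝ (Fin n) → ℝ)
    (gx : EuclideanSpace ℝ (Fin m) → EuclideanSpace ℝ (Fin n) → EuclideanSpace ℝ (Fin m))
    (gy : EuclideanSpace ℝ (Fin m) → EuclideanSpace ℝ (Fin n) → EuclideanSpace ℝ (Fin n))
    (hgx : ∀ x y, HasGradientAt (fun x' => f x' y) (gx x y) x)
    (hgy : ∀ x y, HasGradientAt (fun y' => f x y') (gy x y) y)
    (hconv : ∀ y, ConvexOn ℝ Set.univ (fun x => f x y))
    (hconc : ∀ x, ConcaveOn ℝ Set.univ (fun y => f x y))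
    (G L : ℝ) (hG : 1 < G) (hL : 1 < L)
    (hGx : ∀ x y, ‖gx x y‖ ≤ G) (hGy : ∀ x y, ‖gy x y‖ ≤ G)
    (hLx : ∀ x₁ y₁ x₂ y₂, ‖gx x₁ y₁ - gx x₂ y₂‖ ≤ L * (‖x₁ - x₂‖ + ‖y₁ - y₂‖))
    (hLy : ∀ x₁ y₁ x₂ y₂, ‖gy x₁ y₁ - gy x₂ y₂‖ ≤ L * (‖x₁ - x₂‖ + ‖y₁ - y₂‖))
    -- saddle point
    (xstar : EuclideanSpace ℝ (Fin m)) (ystar : EuclideanSpace ℝ (Fin n))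
    (hsaddle : ∀ x y, f xstar y ≤ f xstar ystar ∧ f xstar ystar ≤ f x ystar)
    (zstar : WithLp 2 (EuclideanSpace ℝ (Fin m) × EuclideanSpace ℝ (Fin n)))
    (hzstar : zstar = (WithLp.equiv 2 _).symm (xstar, ystar))
    -- the operator Φ
    (Φ : WithLp 2 (EuclideanSpace ℝ (Fin m) × EuclideanSpace ℝ (Fin n)) →
         WithLp 2 (EuclideanSpace ℝ (Fin m) × EuclideanSpace ℝ (Fin n)))
    (hΦ : ∀ z, Φ z =
      (WithLp.equiv 2 (EuclideanSpace ℝ (Fin m) × EuclideanSpace ℝ (Fin n))).symm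
        (gx (WithLp.equiv 2 _ z).1 (WithLp.equiv 2 _ z).2,
         -(gy (WithLp.equiv 2 _ z).1 (WithLp.equiv 2 _ z).2)))
    -- delays, horizon, step size
    (τ : ℕ → ℕ) (τmax : ℕ) (hτ : ∀ k, τ k ≤ τmax)
    (T : ℕ)
    (α : ℝ) (hαpos : 0 < α)
    (hα : α ≤ 1 / (2 * Real.sqrt (L * G * τmax * T)))
    -- DGDA iterates, started at z 1
    (z : ℕ → WithLp 2 (EuclideanSpace ℝ (Fin m) × EuclideanSpace ℝ (Fin n)))
    (hstep : ∀ k, 1 ≤ k → z (k + 1) = z k - α • Φ (z (max (k - τ k) 1)))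
    (B : ℝ) (hB : B = max (‖z 1 - zstar‖ ^ 2) G) :
    ∀ k ∈ Finset.Icc 1 T, ‖z k - zstar‖ ^ 2 ≤ 10 * B := by
  have hΦs : Φ = saddleOperator gx gy := funext fun w => by rw [hΦ w]; rfl
  obtain ⟨hA, hα2⟩ := sq_mul_le_of_le_one_div_two_sqrt hαpos hα
  have hτ1 : (1 : ℝ) ≤ τmax := by
    exact_mod_cast Nat.one_le_iff_ne_zero.mpr fun h => by simp [h] at hA
  have hT0 : (0 : ℝ) < T := by
    exact_mod_cast Nat.pos_of_ne_zero fun h => by simp [h] at hA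
  have hmono : ∀ w, 0 ≤ ⟪Φ w, w - zstar⟫ := fun w => by
    rw [hΦs, hzstar]
    exact inner_saddleOperator_sub_nonneg w (hgx _ _) (hgy _ _) (hconv _) (hconc _)
      (hsaddle w.fst w.snd).1 (hsaddle w.fst w.snd).2
  have hM : ∀ w, ‖Φ w‖ ≤ √2 * G := hΦs ▸ norm_saddleOperator_le hGx hGy
  have hlip : ∀ w w', ‖Φ w - Φ w'‖ ≤ 2 * L * ‖w - w'‖ :=
    hΦs ▸ norm_saddleOperator_sub_le (by linarith) hLx hLy
  have hdelay (k : ℕ) (hk : 1 ≤ k) :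
      1 ≤ max (k - τ k) 1 ∧ max (k - τ k) 1 ≤ k ∧ k ≤ max (k - τ k) 1 + τmax := by
    have := hτ k; omega
  have hGB : G ≤ B := hB ▸ le_max_right _ _
  have hz1 : ‖z 1 - zstar‖ ^ 2 ≤ B := hB ▸ le_max_left _ _
  refine forall_mem_Icc_le_of_succ_le_add (u := fun k => ‖z k - zstar‖ ^ 2) (D := 5 * B / T)
    (div_nonneg (by linarith) hT0.le) (by rw [mul_div_cancel₀ _ hT0.ne']; linarith)
    fun k hk hk10 => ?_
  have := norm_delayed_succ_sub_sq_le hαpos.le hmono hM (by linarith) hlip hstep hdelay hk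
  linarith [dgda_increment_le hL hG hGB hτ1 hT0 hα2 (norm_nonneg _) hk10]

/-- Lemma 7: boundedness of the iterates of delayed gradient
descent-ascent for smooth convex-concave `f` with bounded gradients. -/
theorem DGDA_bounded_iterates
    {m n : ℕ}
    (f : EuclideanSpace ℝ (Fin m) → EuclideanSpace ℝ (Fin n) → ℝ)
    (gx : EuclideanSpace ℝ (Fin m) → EuclideanSpace ℝ (Fin n) → EuclideanSpace ℝ (Fin m))
    (gy : EuclideanSpace ℝ (Fin m) → EuclideanSpace ℝ (Fin n) → EuclideanSpace ℝ (Fin n))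
    (hgx : ∀ x y, HasGradientAt (fun x' => f x' y) (gx x y) x)
    (hgy : ∀ x y, HasGradientAt (fun y' => f x y') (gy x y) y)
    (hconv : ∀ y, ConvexOn ℝ Set.univ (fun x => f x y))
    (hconc : ∀ x, ConcaveOn ℝ Set.univ (fun y => f x y))
    (G L : ℝ) (hG : 1 < G) (hL : 1 < L)
    (hGx : ∀ x y, ‖gx x y‖ ≤ G) (hGy : ∀ x y, ‖gy x y‖ ≤ G)
    (hLx : ∀ x₁ y₁ x₂ y₂, ‖gx x₁ y₁ - gx x₂ y₂‖ ≤ L * (‖x₁ - x₂‖ + ‖y₁ - y₂‖))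
    (hLy : ∀ x₁ y₁ x₂ y₂, ‖gy x₁ y₁ - gy x₂ y₂‖ ≤ L * (‖x₁ - x₂‖ + ‖y₁ - y₂‖))
    -- saddle point
    (xstar : EuclideanSpace ℝ (Fin m)) (ystar : EuclideanSpace ℝ (Fin n))
    (hsaddle : ∀ x y, f xstar y ≤ f xstar ystar ∧ f xstar ystar ≤ f x ystar)
    (zstar : WithLp 2 (EuclideanSpace ℝ (Fin m) × EuclideanSpace ℝ (Fin n)))
    (hzstar : zstar = (WithLp.equiv 2 _).symm (xstar, ystar))
    -- the operator Φ
    (Φ : WithLp 2 (EuclideanSpace ℝ (Fin m) × EuclideanSpace ℝ (Fin n)) →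
         WithLp 2 (EuclideanSpace ℝ (Fin m) × EuclideanSpace ℝ (Fin n)))
    (hΦ : ∀ z, Φ z =
      (WithLp.equiv 2 (EuclideanSpace ℝ (Fin m) × EuclideanSpace ℝ (Fin n))).symm
        (gx (WithLp.equiv 2 _ z).1 (WithLp.equiv 2 _ z).2,
         -(gy (WithLp.equiv 2 _ z).1 (WithLp.equiv 2 _ z).2)))
    -- delays, horizon, step size
    (τ : ℕ → ℕ) (τmax : ℕ) (hτmax : 1 ≤ τmax) (hτ : ∀ k, τ k ≤ τmax)
    (T : ℕ) (hT : 1 ≤ T)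
    (α : ℝ) (hαpos : 0 < α)
    (hα : α ≤ 1 / (2 * Real.sqrt (L * G * τmax * T)))
    -- DGDA iterates, started at z 1
    (z : ℕ → WithLp 2 (EuclideanSpace ℝ (Fin m) × EuclideanSpace ℝ (Fin n)))
    (hstep : ∀ k, 1 ≤ k → z (k + 1) = z k - α • Φ (z (max (k - τ k) 1)))
    (B : ℝ) (hB : B = max (‖z 1 - zstar‖ ^ 2) G) :
    ∀ k ∈ Finset.Icc 1 T, ‖z k - zstar‖ ^ 2 ≤ 10 * B :=
  DGDA_bounded_iterates_general f gx gy hgx hgy hconv hconc G L hG hL hGx hGy hLx hLy xstar ystar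
    hsaddle zstar hzstar Φ hΦ τ τmax hτ T α hαpos hα z hstep B hB
end

section
/- Under the assumptions of the bounded-iterates lemma for delayed gradient descent-ascent, with step size α = 1/(2√(LGτ_max T)), the averaged iterates x̄_T = (1/T)Σ_k x_k, ȳ_T = (1/T)Σ_k y_k satisfy the restricted duality-gap bound max_{y : (x̄_T, y) ∈ H} f(x̄_T, y) − min_{x : (x, ȳ_T) ∈ H} f(x, ȳ_T) ≤ 44B √(GLτ_max/T), where H = {z : ‖z − z*‖² ≤ 10B} and B = max{‖z_1 − z*‖², G}. -/
/-!
For a reference point `w = (x, y)`, the two gradient inequalities give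
`f u.1 y - f x u.2 ≤ ⟪Φ u, u - w⟫` with `Φ = (∇ₓ f, -∇_y f)`; at the saddle point the left side
is nonnegative, so `Φ` is monotone there. Expanding `‖z (k+1) - w‖²`, evaluating `Φ` at a stale
iterate costs `O(α² G² τ)` per step, because `‖z k - z (D k)‖ ≤ τ α ‖Φ‖`. With `w = z*` this keeps
the iterates in `H`; for general `w` the telescoped sum, Jensen's inequality for the (convex) gap
and the `G`-Lipschitz bound on `f` control the gap at the averaged iterate. The step size balances
`‖z 1 - w‖² / (α T)` against `α G² τ`.
-/

open scoped InnerProductSpace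
open Finset

section Convexity

variable {E : Type*} [NormedAddCommGroup E] [InnerProductSpace ℝ E] [CompleteSpace E]
  {φ : E → ℝ} {g a b : E} {G : ℝ}

theorem ConvexOn.add_inner_le_of_hasGradientAt (hφ : ConvexOn ℝ Set.univ φ)
    (hg : HasGradientAt φ g a) (b : E) : φ a + ⟪g, b - a⟫_ℝ ≤ φ b := by
  have hline : HasDerivAt (fun t : ℝ => φ (AffineMap.lineMap a b t)) ⟪g, b - a⟫_ℝ 0 := by
    have hl : HasDerivAt (fun t : ℝ => AffineMap.lineMap a b t) (b - a) 0 := by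
      simpa [AffineMap.lineMap_apply_module'] using
        ((hasDerivAt_id (0 : ℝ)).smul_const (b - a)).add_const a
    simpa [Function.comp_def] using
      (hasGradientAt_iff_hasFDerivAt.mp (by simpa using hg)).comp_hasDerivAt 0 hl
  have := (hφ.comp_affineMap (AffineMap.lineMap a b)).le_slope_of_hasDerivAt
    (Set.mem_univ 0) (Set.mem_univ 1) one_pos hline
  simp only [slope_def_field, Function.comp_apply, AffineMap.lineMap_apply_zero,
    AffineMap.lineMap_apply_one, sub_zero, div_one] at this
  linarith

theorem ConcaveOn.le_add_inner_of_hasGradientAt (hφ : ConcaveOn ℝ Set.univ φ)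
    (hg : HasGradientAt φ g a) (b : E) : φ b ≤ φ a + ⟪g, b - a⟫_ℝ := by
  have hneg : HasGradientAt (-φ) (-g) a := by
    rw [hasGradientAt_iff_hasFDerivAt, map_neg]
    exact (hasGradientAt_iff_hasFDerivAt.mp hg).neg
  have := hφ.neg.add_inner_le_of_hasGradientAt hneg b
  simp only [Pi.neg_apply, inner_neg_left] at this
  linarith

theorem ConvexOn.le_add_mul_norm_sub_of_hasGradientAt (hφ : ConvexOn ℝ Set.univ φ)
    (hg : HasGradientAt φ g a) (hG : ‖g‖ ≤ G) (b : E) : φ a ≤ φ b + G * ‖a - b‖ := by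
  have h := hφ.add_inner_le_of_hasGradientAt hg b
  have := (abs_le.mp ((abs_real_inner_le_norm g (b - a)).trans
    (mul_le_mul_of_nonneg_right hG (norm_nonneg _)))).1
  rw [norm_sub_rev] at this
  linarith

theorem ConcaveOn.le_add_mul_norm_sub_of_hasGradientAt (hφ : ConcaveOn ℝ Set.univ φ)
    (hg : HasGradientAt φ g b) (hG : ‖g‖ ≤ G) (a : E) : φ a ≤ φ b + G * ‖a - b‖ := by
  have h := hφ.le_add_inner_of_hasGradientAt hg a
  have := (real_inner_le_norm g (a - b)).trans (mul_le_mul_of_nonneg_right hG (norm_nonneg _))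
  linarith

end Convexity

theorem csSup_sub_csInf_le {s t : Set ℝ} {c : ℝ} (hs : s.Nonempty) (ht : t.Nonempty)
    (h : ∀ a ∈ s, ∀ b ∈ t, a - b ≤ c) : sSup s - sInf t ≤ c := by
  suffices sSup s ≤ c + sInf t by linarith
  refine csSup_le hs fun a ha => ?_
  have : a - c ≤ sInf t := le_csInf ht fun b hb => by linarith [h a ha b hb]
  linarith

theorem Convex.inv_natCast_smul_sum_Icc_mem {E : Type*} [AddCommGroup E] [Module ℝ E]
    {s : Set E} (hs : Convex ℝ s) {T : ℕ} (hT : 1 ≤ T) {v : ℕ → E}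
    (hv : ∀ k ∈ Icc 1 T, v k ∈ s) : (T : ℝ)⁻¹ • ∑ k ∈ Icc 1 T, v k ∈ s := by
  rw [smul_sum]
  refine hs.sum_mem (fun _ _ => by positivity) ?_ hv
  rw [sum_const, Nat.card_Icc, Nat.add_sub_cancel, nsmul_eq_mul]
  exact mul_inv_cancel₀ (by positivity)

theorem ConvexOn.map_inv_natCast_smul_sum_Icc_le {E : Type*} [AddCommGroup E] [Module ℝ E]
    {φ : E → ℝ} (hφ : ConvexOn ℝ Set.univ φ) {T : ℕ} (hT : 1 ≤ T) (v : ℕ → E) :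
    φ ((T : ℝ)⁻¹ • ∑ k ∈ Icc 1 T, v k) ≤ (T : ℝ)⁻¹ * ∑ k ∈ Icc 1 T, φ (v k) := by
  rw [smul_sum, mul_sum]
  refine hφ.map_sum_le (fun _ _ => by positivity) ?_ (fun _ _ => Set.mem_univ _)
  rw [sum_const, Nat.card_Icc, Nat.add_sub_cancel, nsmul_eq_mul]
  exact mul_inv_cancel₀ (by positivity)

theorem convex_setOf_norm_sub_sq_le {E : Type*} [SeminormedAddCommGroup E] [NormedSpace ℝ E]
    (c : E) (r : ℝ) : Convex ℝ {w : E | ‖w - c‖ ^ 2 ≤ r} := by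
  simpa [dist_eq_norm] using
    ((convexOn_univ_dist c).pow (fun _ _ => dist_nonneg) 2).convex_le r

theorem norm_toLp_sub_toLp_sq {X Y : Type*} [SeminormedAddCommGroup X] [SeminormedAddCommGroup Y]
    (a c : X) (b d : Y) :
    ‖WithLp.toLp 2 (a, b) - WithLp.toLp 2 (c, d)‖ ^ 2 = ‖a - c‖ ^ 2 + ‖b - d‖ ^ 2 := by
  rw [← WithLp.toLp_sub, WithLp.prod_norm_sq_eq_of_L2]
  rfl

theorem norm_sub_sq_le_of_norm_sub_sq_le {E : Type*} [SeminormedAddCommGroup E] {a b c : E}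
    {r : ℝ} (ha : ‖a - c‖ ^ 2 ≤ r) (hb : ‖b - c‖ ^ 2 ≤ 20 * r) : ‖a - b‖ ^ 2 ≤ 30 * r := by
  have htri : ‖a - b‖ ≤ ‖a - c‖ + ‖b - c‖ :=
    (norm_sub_le_norm_sub_add_norm_sub a c b).trans_eq (by rw [norm_sub_rev c b])
  -- `(s + t)² ≤ 5 s² + (5/4) t²`
  nlinarith [norm_nonneg (a - b), norm_nonneg (a - c), norm_nonneg (b - c),
    sq_nonneg (4 * ‖a - c‖ - ‖b - c‖)]

structure IsDelayedIteration {E : Type*} [AddCommGroup E] [Module ℝ E]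
    (Φ : E → E) (α : ℝ) (D : ℕ → ℕ) (τ : ℕ) (z : ℕ → E) : Prop where
  step : ∀ k, 1 ≤ k → z (k + 1) = z k - α • Φ (z (D k))
  one_le_delay : ∀ k, 1 ≤ D k
  delay_le : ∀ k, 1 ≤ k → D k ≤ k
  le_delay_add : ∀ k, k ≤ D k + τ

namespace IsDelayedIteration

variable {E : Type*} [NormedAddCommGroup E] [InnerProductSpace ℝ E]
  {Φ : E → E} {z : ℕ → E} {D : ℕ → ℕ} {α M : ℝ} {τ : ℕ}

theorem norm_sub_delay_le (hz : IsDelayedIteration Φ α D τ z) (hα : 0 ≤ α)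
    (hΦ : ∀ u, ‖Φ u‖ ≤ M) {k : ℕ} (hk : 1 ≤ k) : ‖z k - z (D k)‖ ≤ τ * (α * M) := by
  have hinc : ∀ {j}, D k ≤ j → j < k → dist (z j) (z (j + 1)) ≤ α * M := fun hj _ => by
    rw [hz.step _ ((hz.one_le_delay k).trans hj), dist_eq_norm, sub_sub_cancel, norm_smul,
      Real.norm_of_nonneg hα]
    exact mul_le_mul_of_nonneg_left (hΦ _) hα
  calc ‖z k - z (D k)‖ = dist (z (D k)) (z k) := by rw [dist_comm, dist_eq_norm]
    _ ≤ ∑ _j ∈ Ico (D k) k, α * M := dist_le_Ico_sum_of_dist_le (hz.delay_le k hk) hinc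
    _ = (k - D k : ℕ) * (α * M) := by rw [sum_const, Nat.card_Ico, nsmul_eq_mul]
    _ ≤ τ * (α * M) := by
        gcongr
        · exact mul_nonneg hα ((norm_nonneg _).trans (hΦ 0))
        · have := hz.le_delay_add k; omega

theorem norm_sub_sq_succ_le (hz : IsDelayedIteration Φ α D τ z) (hα : 0 ≤ α)
    (hΦ : ∀ u, ‖Φ u‖ ≤ M) {k : ℕ} (hk : 1 ≤ k) (w : E) :
    ‖z (k + 1) - w‖ ^ 2 ≤ ‖z k - w‖ ^ 2 - 2 * α * ⟪Φ (z (D k)), z (D k) - w⟫_ℝ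
      + α ^ 2 * M ^ 2 * (2 * τ + 1) := by
  set g := Φ (z (D k))
  have hexpand : ‖z (k + 1) - w‖ ^ 2
      = ‖z k - w‖ ^ 2 - 2 * α * ⟪g, z (D k) - w⟫_ℝ - 2 * α * ⟪g, z k - z (D k)⟫_ℝ
        + α ^ 2 * ‖g‖ ^ 2 := by
    rw [hz.step k hk, sub_right_comm, norm_sub_sq_real, inner_smul_right, norm_smul,
      Real.norm_of_nonneg hα, real_inner_comm, ← sub_add_sub_cancel (z k) (z (D k)) w,
      inner_add_right]
    ring
  have hlag : -⟪g, z k - z (D k)⟫_ℝ ≤ M * (τ * (α * M)) :=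
    (neg_le_abs _).trans <| (abs_real_inner_le_norm _ _).trans <|
      mul_le_mul (hΦ _) (hz.norm_sub_delay_le hα hΦ hk) (norm_nonneg _)
        ((norm_nonneg _).trans (hΦ 0))
  have hg : ‖g‖ ^ 2 ≤ M ^ 2 := pow_le_pow_left₀ (norm_nonneg _) (hΦ _) 2
  rw [hexpand]
  nlinarith [mul_le_mul_of_nonneg_left hlag (by positivity : (0 : ℝ) ≤ 2 * α),
    mul_le_mul_of_nonneg_left hg (sq_nonneg α)]

theorem two_mul_sum_inner_add_norm_sq_le (hz : IsDelayedIteration Φ α D τ z) (hα : 0 ≤ α)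
    (hΦ : ∀ u, ‖Φ u‖ ≤ M) (w : E) (N : ℕ) :
    2 * α * ∑ k ∈ Icc 1 N, ⟪Φ (z (D k)), z (D k) - w⟫_ℝ + ‖z (N + 1) - w‖ ^ 2
      ≤ ‖z 1 - w‖ ^ 2 + N * (α ^ 2 * M ^ 2 * (2 * τ + 1)) := by
  induction N with
  | zero => simp
  | succ N ih =>
    rw [sum_Icc_succ_top (by omega), mul_add]
    have := hz.norm_sub_sq_succ_le hα hΦ (by omega : 1 ≤ N + 1) w
    push_cast
    linarith

theorem norm_sub_sq_le_of_inner_nonneg (hz : IsDelayedIteration Φ α D τ z) (hα : 0 ≤ α)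
    (hΦ : ∀ u, ‖Φ u‖ ≤ M) {w : E} (hmono : ∀ u, 0 ≤ ⟪Φ u, u - w⟫_ℝ) {k N : ℕ} (hk : 1 ≤ k)
    (hkN : k ≤ N + 1) :
    ‖z k - w‖ ^ 2 ≤ ‖z 1 - w‖ ^ 2 + N * (α ^ 2 * M ^ 2 * (2 * τ + 1)) := by
  obtain ⟨j, rfl⟩ : ∃ j, k = j + 1 := ⟨k - 1, by omega⟩
  have hsum := hz.two_mul_sum_inner_add_norm_sq_le hα hΦ w j
  have hinner : 0 ≤ 2 * α * ∑ k ∈ Icc 1 j, ⟪Φ (z (D k)), z (D k) - w⟫_ℝ :=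
    mul_nonneg (by positivity) (sum_nonneg fun k _ => hmono _)
  have hjN : (j : ℝ) ≤ N := by exact_mod_cast (by omega : j ≤ N)
  nlinarith [mul_le_mul_of_nonneg_right hjN (by positivity : 0 ≤ α ^ 2 * M ^ 2 * (2 * τ + 1))]

end IsDelayedIteration

noncomputable def dgdaStepSize (L G τ T : ℝ) : ℝ := 1 / (2 * √(L * G * τ * T))

theorem dgdaStepSize_eq {L G τ T : ℝ} (hL : 0 < L) (hG : 0 < G) (hτ : 0 < τ) (hT : 0 < T) :
    dgdaStepSize L G τ T = 1 / (2 * T * √(G * L * τ / T)) := by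
  have : √(L * G * τ * T) = √(G * L * τ / T) * T := by
    rw [← Real.sqrt_sq hT.le, ← Real.sqrt_mul (by positivity), Real.sqrt_sq hT.le]
    congr 1; field_simp
  rw [dgdaStepSize, this]; ring

theorem dgdaStepSize_mul_sq_mul {L G τ T : ℝ} (hL : 0 < L) (hG : 0 < G) (hτ : 0 < τ)
    (hT : 0 < T) : dgdaStepSize L G τ T * G ^ 2 * τ = G / (2 * L) * √(G * L * τ / T) := by
  have hr : √(G * L * τ / T) ^ 2 = G * L * τ / T := Real.sq_sqrt (by positivity)
  have : 0 < √(G * L * τ / T) := Real.sqrt_pos.mpr (by positivity)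
  rw [dgdaStepSize_eq hL hG hτ hT]
  field_simp
  rw [hr]
  field_simp

theorem dgdaStepSize_sq_mul_le {L G τ T : ℝ} (hL : 0 < L) (hG : 0 < G) (hτ : 1 ≤ τ)
    (hT : 0 < T) : T * (dgdaStepSize L G τ T ^ 2 * (2 * G) ^ 2 * (2 * τ + 1)) ≤ 3 * (G / L) := by
  have hτ0 : 0 < τ := one_pos.trans_le hτ
  have hid := dgdaStepSize_mul_sq_mul hL hG hτ0 hT
  have hα := dgdaStepSize_eq hL hG hτ0 hT
  set α := dgdaStepSize L G τ T
  set r := √(G * L * τ / T)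
  have hr : 0 < r := Real.sqrt_pos.mpr (by positivity)
  have hαTr : α * T * r = 1 / 2 := by rw [hα]; field_simp
  have hα0 : 0 < α := by rw [hα]; positivity
  calc T * (α ^ 2 * (2 * G) ^ 2 * (2 * τ + 1)) ≤ T * (α ^ 2 * (2 * G) ^ 2 * (3 * τ)) := by
        gcongr; linarith
    _ = 12 * (α * T) * (α * G ^ 2 * τ) := by ring
    _ = 3 * (G / L) := by rw [hid]; field_simp; linear_combination 12 * hαTr

theorem div_two_mul_dgdaStepSize_add_le {L G τ T : ℝ} (hL : 0 < L) (hG : 0 < G) (hτ : 1 ≤ τ)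
    (hT : 0 < T) (A : ℝ) :
    A / (2 * dgdaStepSize L G τ T * T) + 2 * dgdaStepSize L G τ T * G ^ 2 * (4 * τ + 1)
      ≤ (A + 5 * (G / L)) * √(G * L * τ / T) := by
  have hτ0 : 0 < τ := one_pos.trans_le hτ
  have hid := dgdaStepSize_mul_sq_mul hL hG hτ0 hT
  have hα := dgdaStepSize_eq hL hG hτ0 hT
  set α := dgdaStepSize L G τ T
  set r := √(G * L * τ / T)
  have hr : 0 < r := Real.sqrt_pos.mpr (by positivity)
  have hα0 : 0 < α := by rw [hα]; positivity
  have hfirst : A / (2 * α * T) = A * r := by rw [hα]; field_simp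
  calc A / (2 * α * T) + 2 * α * G ^ 2 * (4 * τ + 1)
      ≤ A * r + 10 * (α * G ^ 2 * τ) := by
        rw [hfirst]; nlinarith [mul_pos hα0 (pow_pos hG 2)]
    _ = (A + 5 * (G / L)) * r := by rw [hid]; ring

section SaddleFunction

variable {X Y : Type*} [NormedAddCommGroup X] [NormedAddCommGroup Y]
  {f : X → Y → ℝ} {gx : X → Y → X} {gy : X → Y → Y} {G : ℝ}

def gdaField (gx : X → Y → X) (gy : X → Y → Y) (u : WithLp 2 (X × Y)) : WithLp 2 (X × Y) :=
  WithLp.toLp 2 (gx u.fst u.snd, -gy u.fst u.snd)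

theorem norm_gdaField_le (hGx : ∀ x y, ‖gx x y‖ ≤ G) (hGy : ∀ x y, ‖gy x y‖ ≤ G)
    (u : WithLp 2 (X × Y)) : ‖gdaField gx gy u‖ ≤ 2 * G := by
  have hsplit : gdaField gx gy u
      = WithLp.toLp 2 (gx u.fst u.snd, 0) + WithLp.toLp 2 (0, -gy u.fst u.snd) := by
    rw [← WithLp.toLp_add, Prod.mk_add_mk, add_zero, zero_add]; rfl
  calc ‖gdaField gx gy u‖ ≤ ‖gx u.fst u.snd‖ + ‖gy u.fst u.snd‖ := by
        rw [hsplit, ← WithLp.norm_toLp_fst 2 X Y, ← norm_neg (gy _ _),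
          ← WithLp.norm_toLp_snd 2 X Y]
        exact norm_add_le _ _
    _ ≤ 2 * G := by linarith [hGx u.fst u.snd, hGy u.fst u.snd]

variable [InnerProductSpace ℝ X] [InnerProductSpace ℝ Y] [CompleteSpace X] [CompleteSpace Y]

structure IsConvexConcaveWithGradient (f : X → Y → ℝ) (gx : X → Y → X) (gy : X → Y → Y) :
    Prop where
  hasGradientAt_fst : ∀ x y, HasGradientAt (fun x' => f x' y) (gx x y) x
  hasGradientAt_snd : ∀ x y, HasGradientAt (fun y' => f x y') (gy x y) y
  convexOn_fst : ∀ y, ConvexOn ℝ Set.univ (fun x => f x y)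
  concaveOn_snd : ∀ x, ConcaveOn ℝ Set.univ (fun y => f x y)

namespace IsConvexConcaveWithGradient

theorem gap_le_inner_gdaField (hf : IsConvexConcaveWithGradient f gx gy)
    (u : WithLp 2 (X × Y)) (x : X) (y : Y) :
    f u.fst y - f x u.snd ≤ ⟪gdaField gx gy u, u - WithLp.toLp 2 (x, y)⟫_ℝ := by
  have hx := (hf.convexOn_fst u.snd).add_inner_le_of_hasGradientAt
    (hf.hasGradientAt_fst u.fst u.snd) x
  have hy := (hf.concaveOn_snd u.fst).le_add_inner_of_hasGradientAt
    (hf.hasGradientAt_snd u.fst u.snd) y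
  have hinner : ⟪gdaField gx gy u, u - WithLp.toLp 2 (x, y)⟫_ℝ
      = -⟪gx u.fst u.snd, x - u.fst⟫_ℝ + ⟪gy u.fst u.snd, y - u.snd⟫_ℝ := by
    change ⟪gx u.fst u.snd, u.fst - x⟫_ℝ + ⟪-gy u.fst u.snd, u.snd - y⟫_ℝ = _
    rw [inner_neg_left, ← neg_sub x u.fst, ← neg_sub y u.snd, inner_neg_right, inner_neg_right,
      neg_neg]
  linarith

theorem inner_gdaField_sub_nonneg (hf : IsConvexConcaveWithGradient f gx gy) {xs : X} {ys : Y}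
    (hsaddle : ∀ x y, f xs y ≤ f xs ys ∧ f xs ys ≤ f x ys) (u : WithLp 2 (X × Y)) :
    0 ≤ ⟪gdaField gx gy u, u - WithLp.toLp 2 (xs, ys)⟫_ℝ := by
  have := hf.gap_le_inner_gdaField u xs ys
  linarith [(hsaddle u.fst u.snd).1, (hsaddle u.fst u.snd).2]

theorem convexOn_gap (hf : IsConvexConcaveWithGradient f gx gy) (x : X) (y : Y) :
    ConvexOn ℝ Set.univ (fun u : WithLp 2 (X × Y) => f u.fst y - f x u.snd) :=
  ((hf.convexOn_fst y).comp_linearMap (WithLp.fstₗ 2 ℝ X Y)).sub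
    ((hf.concaveOn_snd x).comp_linearMap (WithLp.sndₗ 2 ℝ X Y))

theorem gap_le_gap_add_mul_norm_sub (hf : IsConvexConcaveWithGradient f gx gy)
    (hGx : ∀ x y, ‖gx x y‖ ≤ G) (hGy : ∀ x y, ‖gy x y‖ ≤ G)
    (x : X) (y : Y) (u v : WithLp 2 (X × Y)) :
    f u.fst y - f x u.snd ≤ f v.fst y - f x v.snd + 2 * G * ‖u - v‖ := by
  have hx := (hf.convexOn_fst y).le_add_mul_norm_sub_of_hasGradientAt
    (hf.hasGradientAt_fst u.fst y) (hGx _ _) v.fst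
  have hy := (hf.concaveOn_snd x).le_add_mul_norm_sub_of_hasGradientAt
    (hf.hasGradientAt_snd x u.snd) (hGy _ _) v.snd
  have h1 : ‖u.fst - v.fst‖ ≤ ‖u - v‖ := WithLp.norm_fst_le _ (u - v)
  have h2 : ‖v.snd - u.snd‖ ≤ ‖u - v‖ := by
    rw [norm_sub_rev]; exact WithLp.norm_snd_le _ (u - v)
  have hG : 0 ≤ G := (norm_nonneg _).trans (hGx x y)
  nlinarith

theorem gap_average_le (hf : IsConvexConcaveWithGradient f gx gy)
    (hGx : ∀ x y, ‖gx x y‖ ≤ G) (hGy : ∀ x y, ‖gy x y‖ ≤ G)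
    {z : ℕ → WithLp 2 (X × Y)} {D : ℕ → ℕ} {α : ℝ} {τ T : ℕ}
    (hz : IsDelayedIteration (gdaField gx gy) α D τ z) (hα : 0 < α) (hT : 1 ≤ T)
    (x : X) (y : Y) :
    f ((T : ℝ)⁻¹ • ∑ k ∈ Icc 1 T, z k).fst y - f x ((T : ℝ)⁻¹ • ∑ k ∈ Icc 1 T, z k).snd
      ≤ ‖z 1 - WithLp.toLp 2 (x, y)‖ ^ 2 / (2 * α * T) + 2 * α * G ^ 2 * (4 * τ + 1) := by
  set w := WithLp.toLp 2 (x, y)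
  set gap := fun u : WithLp 2 (X × Y) => f u.fst y - f x u.snd
  set zbar := (T : ℝ)⁻¹ • ∑ k ∈ Icc 1 T, z k
  set zD := (T : ℝ)⁻¹ • ∑ k ∈ Icc 1 T, z (D k)
  have hM := norm_gdaField_le hGx hGy
  have hT0 : (0 : ℝ) < T := by exact_mod_cast hT
  have hG : 0 ≤ G := (norm_nonneg _).trans (hGx x y)
  have hsum := hz.two_mul_sum_inner_add_norm_sq_le hα.le hM w T
  have hgap_sum : ∑ k ∈ Icc 1 T, gap (z (D k))
      ≤ ∑ k ∈ Icc 1 T, ⟪gdaField gx gy (z (D k)), z (D k) - w⟫_ℝ :=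
    sum_le_sum fun k _ => hf.gap_le_inner_gdaField _ x y
  have hjensen : gap zD ≤ (T : ℝ)⁻¹ * ∑ k ∈ Icc 1 T, gap (z (D k)) :=
    (hf.convexOn_gap x y).map_inv_natCast_smul_sum_Icc_le hT _
  have hlag : ‖zbar - zD‖ ≤ τ * (α * (2 * G)) := by
    have : zbar - zD ∈ Metric.closedBall (0 : WithLp 2 (X × Y)) (τ * (α * (2 * G))) := by
      rw [← smul_sub, ← sum_sub_distrib]
      refine (convex_closedBall _ _).inv_natCast_smul_sum_Icc_mem hT fun k hk => ?_
      rw [mem_closedBall_zero_iff]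
      exact hz.norm_sub_delay_le hα.le hM (mem_Icc.mp hk).1
    rwa [mem_closedBall_zero_iff] at this
  have hlip := hf.gap_le_gap_add_mul_norm_sub hGx hGy x y zbar zD
  have havg : (T : ℝ)⁻¹ * ∑ k ∈ Icc 1 T, gap (z (D k))
      ≤ ‖z 1 - w‖ ^ 2 / (2 * α * T) + 2 * α * G ^ 2 * (2 * τ + 1) := by
    have hrw : (T : ℝ) * (‖z 1 - w‖ ^ 2 / (2 * α * T) + 2 * α * G ^ 2 * (2 * τ + 1))
        = (‖z 1 - w‖ ^ 2 + T * (α ^ 2 * (2 * G) ^ 2 * (2 * τ + 1))) / (2 * α) := by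
      field_simp
    rw [inv_mul_le_iff₀ hT0, hrw, le_div_iff₀ (by positivity)]
    nlinarith [mul_le_mul_of_nonneg_left hgap_sum (by positivity : (0 : ℝ) ≤ 2 * α),
      sq_nonneg ‖z (T + 1) - w‖]
  nlinarith [mul_le_mul_of_nonneg_left hlag (by positivity : (0 : ℝ) ≤ 2 * G)]

theorem norm_sub_saddle_sq_le (hf : IsConvexConcaveWithGradient f gx gy)
    (hGx : ∀ x y, ‖gx x y‖ ≤ G) (hGy : ∀ x y, ‖gy x y‖ ≤ G) {xs : X} {ys : Y}
    (hsaddle : ∀ x y, f xs y ≤ f xs ys ∧ f xs ys ≤ f x ys)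
    {z : ℕ → WithLp 2 (X × Y)} {D : ℕ → ℕ} {L : ℝ} {τ T : ℕ}
    (hz : IsDelayedIteration (gdaField gx gy) (dgdaStepSize L G τ T) D τ z)
    (hG : 0 < G) (hL : 0 < L) (hτ : 1 ≤ τ) (hT : 1 ≤ T) {k : ℕ} (hk : k ∈ Icc 1 T) :
    ‖z k - WithLp.toLp 2 (xs, ys)‖ ^ 2 ≤ ‖z 1 - WithLp.toLp 2 (xs, ys)‖ ^ 2 + 3 * (G / L) := by
  have hτ' : (1 : ℝ) ≤ τ := by exact_mod_cast hτ
  have hT' : (0 : ℝ) < T := by exact_mod_cast hT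
  have hα : 0 < dgdaStepSize L G τ T := by
    rw [dgdaStepSize_eq hL hG (by positivity) hT']; positivity
  have := hz.norm_sub_sq_le_of_inner_nonneg hα.le (norm_gdaField_le hGx hGy)
    (hf.inner_gdaField_sub_nonneg hsaddle) (mem_Icc.mp hk).1 (Nat.le_succ_of_le (mem_Icc.mp hk).2)
  linarith [dgdaStepSize_sq_mul_le hL hG hτ' hT']

theorem gap_average_le_mul_sqrt (hf : IsConvexConcaveWithGradient f gx gy)
    (hGx : ∀ x y, ‖gx x y‖ ≤ G) (hGy : ∀ x y, ‖gy x y‖ ≤ G)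
    {z : ℕ → WithLp 2 (X × Y)} {D : ℕ → ℕ} {L : ℝ} {τ T : ℕ}
    (hz : IsDelayedIteration (gdaField gx gy) (dgdaStepSize L G τ T) D τ z)
    (hG : 0 < G) (hL : 0 < L) (hτ : 1 ≤ τ) (hT : 1 ≤ T) {c : WithLp 2 (X × Y)} {B : ℝ}
    (hz1 : ‖z 1 - c‖ ^ 2 ≤ B) (hGL : G / L ≤ B) (x : X) (y : Y)
    (hw : ‖WithLp.toLp 2 (x, y) - c‖ ^ 2 ≤ 20 * B) :
    f ((T : ℝ)⁻¹ • ∑ k ∈ Icc 1 T, z k).fst y - f x ((T : ℝ)⁻¹ • ∑ k ∈ Icc 1 T, z k).snd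
      ≤ 35 * B * √(G * L * τ / T) := by
  have hτ' : (1 : ℝ) ≤ τ := by exact_mod_cast hτ
  have hT' : (0 : ℝ) < T := by exact_mod_cast hT
  have hα : 0 < dgdaStepSize L G τ T := by
    rw [dgdaStepSize_eq hL hG (by positivity) hT']; positivity
  have hgap := hf.gap_average_le hGx hGy hz hα hT x y
  have hrate := div_two_mul_dgdaStepSize_add_le hL hG hτ' hT' (‖z 1 - WithLp.toLp 2 (x, y)‖ ^ 2)
  have hA : ‖z 1 - WithLp.toLp 2 (x, y)‖ ^ 2 + 5 * (G / L) ≤ 35 * B := by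
    linarith [norm_sub_sq_le_of_norm_sub_sq_le hz1 hw]
  nlinarith [mul_le_mul_of_nonneg_right hA (Real.sqrt_nonneg (G * L * τ / T))]

theorem sSup_sub_sInf_le (hf : IsConvexConcaveWithGradient f gx gy)
    (hGx : ∀ x y, ‖gx x y‖ ≤ G) (hGy : ∀ x y, ‖gy x y‖ ≤ G) {xs : X} {ys : Y}
    (hsaddle : ∀ x y, f xs y ≤ f xs ys ∧ f xs ys ≤ f x ys)
    {z : ℕ → WithLp 2 (X × Y)} {D : ℕ → ℕ} {L : ℝ} {τ T : ℕ}
    (hz : IsDelayedIteration (gdaField gx gy) (dgdaStepSize L G τ T) D τ z)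
    (hG : 0 < G) (hL : 1 ≤ L) (hτ : 1 ≤ τ) (hT : 1 ≤ T) {B : ℝ}
    (hz1 : ‖z 1 - WithLp.toLp 2 (xs, ys)‖ ^ 2 ≤ B) (hGB : G ≤ B) :
    let zbar := (T : ℝ)⁻¹ • ∑ k ∈ Icc 1 T, z k
    let H := {w | ‖w - WithLp.toLp 2 (xs, ys)‖ ^ 2 ≤ 10 * B}
    sSup ((fun y => f zbar.fst y) '' {y | WithLp.toLp 2 (zbar.fst, y) ∈ H})
      - sInf ((fun x => f x zbar.snd) '' {x | WithLp.toLp 2 (x, zbar.snd) ∈ H})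
      ≤ 35 * B * √(G * L * τ / T) := by
  intro zbar H
  have hL0 : 0 < L := one_pos.trans_le hL
  have hGL : G / L ≤ B := (div_le_self hG.le hL).trans hGB
  have hzbar : zbar ∈ H :=
    (convex_setOf_norm_sub_sq_le _ _).inv_natCast_smul_sum_Icc_mem hT fun k hk => by
      rw [Set.mem_ofPred_eq]
      linarith [hf.norm_sub_saddle_sq_le hGx hGy hsaddle hz hG hL0 hτ hT hk]
  refine csSup_sub_csInf_le ⟨_, _, hzbar, rfl⟩ ⟨_, _, hzbar, rfl⟩ ?_
  rintro _ ⟨y, hy, rfl⟩ _ ⟨x, hx, rfl⟩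
  simp only [H, Set.mem_ofPred_eq, norm_toLp_sub_toLp_sq] at hx hy
  refine hf.gap_average_le_mul_sqrt hGx hGy hz hG hL0 hτ hT hz1 hGL x y ?_
  rw [norm_toLp_sub_toLp_sq]
  linarith [sq_nonneg ‖zbar.fst - xs‖, sq_nonneg ‖zbar.snd - ys‖]

end IsConvexConcaveWithGradient

end SaddleFunction

theorem DGDA_convex_concave_rate_general
    {m n : ℕ}
    (f : EuclideanSpace ℝ (Fin m) → EuclideanSpace ℝ (Fin n) → ℝ)
    (gx : EuclideanSpace ℝ (Fin m) → EuclideanSpace ℝ (Fin n) → EuclideanSpace ℝ (Fin m))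
    (gy : EuclideanSpace ℝ (Fin m) → EuclideanSpace ℝ (Fin n) → EuclideanSpace ℝ (Fin n))
    (hgx : ∀ x y, HasGradientAt (fun x' => f x' y) (gx x y) x)
    (hgy : ∀ x y, HasGradientAt (fun y' => f x y') (gy x y) y)
    (hconv : ∀ y, ConvexOn ℝ Set.univ (fun x => f x y))
    (hconc : ∀ x, ConcaveOn ℝ Set.univ (fun y => f x y))
    (G L : ℝ) (hG : 1 < G) (hL : 1 < L)
    (hGx : ∀ x y, ‖gx x y‖ ≤ G) (hGy : ∀ x y, ‖gy x y‖ ≤ G)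
    -- saddle point
    (xstar : EuclideanSpace ℝ (Fin m)) (ystar : EuclideanSpace ℝ (Fin n))
    (hsaddle : ∀ x y, f xstar y ≤ f xstar ystar ∧ f xstar ystar ≤ f x ystar)
    (zstar : WithLp 2 (EuclideanSpace ℝ (Fin m) × EuclideanSpace ℝ (Fin n)))
    (hzstar : zstar = (WithLp.equiv 2 _).symm (xstar, ystar))
    -- the operator Φ
    (Φ : WithLp 2 (EuclideanSpace ℝ (Fin m) × EuclideanSpace ℝ (Fin n)) →
         WithLp 2 (EuclideanSpace ℝ (Fin m) × EuclideanSpace ℝ (Fin n)))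
    (hΦ : ∀ z, Φ z =
      (WithLp.equiv 2 (EuclideanSpace ℝ (Fin m) × EuclideanSpace ℝ (Fin n))).symm
        (gx (WithLp.equiv 2 _ z).1 (WithLp.equiv 2 _ z).2,
         -(gy (WithLp.equiv 2 _ z).1 (WithLp.equiv 2 _ z).2)))
    -- delays, horizon, step size
    (τ : ℕ → ℕ) (τmax : ℕ) (hτmax : 1 ≤ τmax) (hτ : ∀ k, τ k ≤ τmax)
    (T : ℕ) (hT : 1 ≤ T)
    (α : ℝ) (hα : α = 1 / (2 * Real.sqrt (L * G * τmax * T)))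
    -- DGDA iterates, started at z 1
    (z : ℕ → WithLp 2 (EuclideanSpace ℝ (Fin m) × EuclideanSpace ℝ (Fin n)))
    (hstep : ∀ k, 1 ≤ k → z (k + 1) = z k - α • Φ (z (max (k - τ k) 1)))
    (B : ℝ) (hB : B = max (‖z 1 - zstar‖ ^ 2) G)
    -- the bounded set H and the averaged iterates
    (H : Set (WithLp 2 (EuclideanSpace ℝ (Fin m) × EuclideanSpace ℝ (Fin n))))
    (hH : H = {w | ‖w - zstar‖ ^ 2 ≤ 10 * B})
    (xbar : EuclideanSpace ℝ (Fin m)) (ybar : EuclideanSpace ℝ (Fin n))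
    (hxbar : xbar = (T : ℝ)⁻¹ • ∑ k ∈ Finset.Icc 1 T, (WithLp.equiv 2 _ (z k)).1)
    (hybar : ybar = (T : ℝ)⁻¹ • ∑ k ∈ Finset.Icc 1 T, (WithLp.equiv 2 _ (z k)).2) :
    sSup ((fun y => f xbar y) ''
        {y | (WithLp.equiv 2 (EuclideanSpace ℝ (Fin m) × EuclideanSpace ℝ (Fin n))).symm
              (xbar, y) ∈ H}) -
      sInf ((fun x => f x ybar) ''
        {x | (WithLp.equiv 2 (EuclideanSpace ℝ (Fin m) × EuclideanSpace ℝ (Fin n))).symm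
              (x, ybar) ∈ H}) ≤
      44 * B * Real.sqrt (G * L * τmax / T) := by
  have hΦ' : Φ = gdaField gx gy := funext fun u => by simpa [gdaField] using hΦ u
  have hα' : α = dgdaStepSize L G τmax T := hα
  simp only [WithLp.equiv_symm_apply] at hzstar ⊢
  subst hΦ' hzstar hH hα'
  have hf : IsConvexConcaveWithGradient f gx gy := ⟨hgx, hgy, hconv, hconc⟩
  have hz : IsDelayedIteration (gdaField gx gy) (dgdaStepSize L G τmax T)
      (fun k => max (k - τ k) 1) τmax z :=
    ⟨hstep, fun k => le_max_right _ _, fun k hk => max_le (Nat.sub_le _ _) hk,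
      fun k => by have := hτ k; omega⟩
  set zbar := (T : ℝ)⁻¹ • ∑ k ∈ Icc 1 T, z k
  obtain rfl : xbar = zbar.fst := by
    rw [hxbar, WithLp.smul_fst, ← WithLp.fstₗ_apply (𝕜 := ℝ), map_sum]; rfl
  obtain rfl : ybar = zbar.snd := by
    rw [hybar, WithLp.smul_snd, ← WithLp.sndₗ_apply (𝕜 := ℝ), map_sum]; rfl
  have hGB : G ≤ B := hB ▸ le_max_right _ _
  calc _ ≤ 35 * B * √(G * L * τmax / T) :=
        hf.sSup_sub_sInf_le hGx hGy hsaddle hz (one_pos.trans hG) hL.le hτmax hT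
          (hB ▸ le_max_left _ _) hGB
    _ ≤ 44 * B * √(G * L * τmax / T) := by
        have : 0 ≤ B * √(G * L * τmax / T) := mul_nonneg (by linarith) (Real.sqrt_nonneg _)
        linarith

/-- Theorem 2: restricted duality-gap rate for delayed gradient
descent-ascent on smooth convex-concave functions with bounded gradients. -/
theorem DGDA_convex_concave_rate
    {m n : ℕ}
    (f : EuclideanSpace ℝ (Fin m) → EuclideanSpace ℝ (Fin n) → ℝ)
    (gx : EuclideanSpace ℝ (Fin m) → EuclideanSpace ℝ (Fin n) → EuclideanSpace ℝ (Fin m))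
    (gy : EuclideanSpace ℝ (Fin m) → EuclideanSpace ℝ (Fin n) → EuclideanSpace ℝ (Fin n))
    (hgx : ∀ x y, HasGradientAt (fun x' => f x' y) (gx x y) x)
    (hgy : ∀ x y, HasGradientAt (fun y' => f x y') (gy x y) y)
    (hconv : ∀ y, ConvexOn ℝ Set.univ (fun x => f x y))
    (hconc : ∀ x, ConcaveOn ℝ Set.univ (fun y => f x y))
    (G L : ℝ) (hG : 1 < G) (hL : 1 < L)
    (hGx : ∀ x y, ‖gx x y‖ ≤ G) (hGy : ∀ x y, ‖gy x y‖ ≤ G)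
    (hLx : ∀ x₁ y₁ x₂ y₂, ‖gx x₁ y₁ - gx x₂ y₂‖ ≤ L * (‖x₁ - x₂‖ + ‖y₁ - y₂‖))
    (hLy : ∀ x₁ y₁ x₂ y₂, ‖gy x₁ y₁ - gy x₂ y₂‖ ≤ L * (‖x₁ - x₂‖ + ‖y₁ - y₂‖))
    -- saddle point
    (xstar : EuclideanSpace ℝ (Fin m)) (ystar : EuclideanSpace ℝ (Fin n))
    (hsaddle : ∀ x y, f xstar y ≤ f xstar ystar ∧ f xstar ystar ≤ f x ystar)
    (zstar : WithLp 2 (EuclideanSpace ℝ (Fin m) × EuclideanSpace ℝ (Fin n)))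
    (hzstar : zstar = (WithLp.equiv 2 _).symm (xstar, ystar))
    -- the operator Φ
    (Φ : WithLp 2 (EuclideanSpace ℝ (Fin m) × EuclideanSpace ℝ (Fin n)) →
         WithLp 2 (EuclideanSpace ℝ (Fin m) × EuclideanSpace ℝ (Fin n)))
    (hΦ : ∀ z, Φ z =
      (WithLp.equiv 2 (EuclideanSpace ℝ (Fin m) × EuclideanSpace ℝ (Fin n))).symm
        (gx (WithLp.equiv 2 _ z).1 (WithLp.equiv 2 _ z).2,
         -(gy (WithLp.equiv 2 _ z).1 (WithLp.equiv 2 _ z).2)))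
    -- delays, horizon, step size
    (τ : ℕ → ℕ) (τmax : ℕ) (hτmax : 1 ≤ τmax) (hτ : ∀ k, τ k ≤ τmax)
    (T : ℕ) (hT : 1 ≤ T) (hTL : L ≤ (T : ℝ))
    (α : ℝ) (hα : α = 1 / (2 * Real.sqrt (L * G * τmax * T)))
    -- DGDA iterates, started at z 1
    (z : ℕ → WithLp 2 (EuclideanSpace ℝ (Fin m) × EuclideanSpace ℝ (Fin n)))
    (hstep : ∀ k, 1 ≤ k → z (k + 1) = z k - α • Φ (z (max (k - τ k) 1)))
    (B : ℝ) (hB : B = max (‖z 1 - zstar‖ ^ 2) G)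
    -- the bounded set H and the averaged iterates
    (H : Set (WithLp 2 (EuclideanSpace ℝ (Fin m) × EuclideanSpace ℝ (Fin n))))
    (hH : H = {w | ‖w - zstar‖ ^ 2 ≤ 10 * B})
    (xbar : EuclideanSpace ℝ (Fin m)) (ybar : EuclideanSpace ℝ (Fin n))
    (hxbar : xbar = (T : ℝ)⁻¹ • ∑ k ∈ Finset.Icc 1 T, (WithLp.equiv 2 _ (z k)).1)
    (hybar : ybar = (T : ℝ)⁻¹ • ∑ k ∈ Finset.Icc 1 T, (WithLp.equiv 2 _ (z k)).2) :
    sSup ((fun y => f xbar y) ''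
        {y | (WithLp.equiv 2 (EuclideanSpace ℝ (Fin m) × EuclideanSpace ℝ (Fin n))).symm
              (xbar, y) ∈ H}) -
      sInf ((fun x => f x ybar) ''
        {x | (WithLp.equiv 2 (EuclideanSpace ℝ (Fin m) × EuclideanSpace ℝ (Fin n))).symm
              (x, ybar) ∈ H}) ≤
      44 * B * Real.sqrt (G * L * τmax / T) :=
  DGDA_convex_concave_rate_general f gx gy hgx hgy hconv hconc G L hG hL hGx hGy xstar ystar hsaddle
    zstar hzstar Φ hΦ τ τmax hτmax hτ T hT α hα z hstep B hB H hH xbar ybar hxbar hybar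
end

section
/- If f is μ-strongly convex-μ-strongly concave with L-Lipschitz partial gradients, then Φ(z) = (∇_x f, −∇_y f) satisfies the cocoercivity-type inequality ⟨Φ(z) − Φ(ẑ), z − ẑ⟩ ≥ (μ/(4L²))‖Φ(z) − Φ(ẑ)‖² for all z, ẑ ∈ ℝ^{m+n}. -/
/-!
Summing the strong convexity inequalities in `x` at `(x, y)` and `(x', y')` with the strong
concavity inequalities in `y` at the same two points, all values of `f` cancel, and what remains
says that `Φ` is `μ`-strongly monotone. The Lipschitz bounds give `‖Φ z - Φ ẑ‖ ≤ 2L ‖z - ẑ‖`,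
and a `μ`-strongly monotone `2L`-Lipschitz operator is `μ / (2L)²`-cocoercive.
-/

open RealInnerProductSpace

theorem div_mul_norm_sq_le_inner {H : Type*} [NormedAddCommGroup H] [InnerProductSpace ℝ H]
    {μ K : ℝ} (hμ : 0 ≤ μ) (hK : 0 ≤ K) {u v : H}
    (hmono : μ * ‖v‖ ^ 2 ≤ ⟪u, v⟫) (hlip : ‖u‖ ^ 2 ≤ K * ‖v‖ ^ 2) :
    μ / K * ‖u‖ ^ 2 ≤ ⟪u, v⟫ := by
  have hcancel : μ / K * K ≤ μ := by
    rcases hK.eq_or_lt with rfl | hK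
    · simpa using hμ
    · rw [div_mul_cancel₀ μ hK.ne']
  calc μ / K * ‖u‖ ^ 2 ≤ μ / K * (K * ‖v‖ ^ 2) :=
        mul_le_mul_of_nonneg_left hlip (div_nonneg hμ hK)
    _ = μ / K * K * ‖v‖ ^ 2 := by ring
    _ ≤ μ * ‖v‖ ^ 2 := mul_le_mul_of_nonneg_right hcancel (sq_nonneg _)
    _ ≤ ⟪u, v⟫ := hmono

theorem sq_add_sq_le_of_le_mul_add {a b p q L : ℝ} (ha : 0 ≤ a) (hb : 0 ≤ b)
    (hap : a ≤ L * (p + q)) (hbp : b ≤ L * (p + q)) :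
    a ^ 2 + b ^ 2 ≤ 4 * L ^ 2 * (p ^ 2 + q ^ 2) := by
  have ha2 : a ^ 2 ≤ L ^ 2 * (p + q) ^ 2 := by
    rw [← mul_pow]; exact pow_le_pow_left₀ ha hap 2
  have hb2 : b ^ 2 ≤ L ^ 2 * (p + q) ^ 2 := by
    rw [← mul_pow]; exact pow_le_pow_left₀ hb hbp 2
  linarith [mul_le_mul_of_nonneg_left (add_sq_le (a := p) (b := q)) (sq_nonneg L)]

section Saddle

variable {E F : Type*} [NormedAddCommGroup E] [NormedAddCommGroup F]

def saddleGrad (gx : E → F → E) (gy : E → F → F) (z : WithLp 2 (E × F)) : WithLp 2 (E × F) :=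
  WithLp.toLp 2 (gx z.fst z.snd, -gy z.fst z.snd)

variable (gx : E → F → E) (gy : E → F → F) (z w : WithLp 2 (E × F))

theorem saddleGrad_sub_fst :
    (saddleGrad gx gy z - saddleGrad gx gy w).fst = gx z.fst z.snd - gx w.fst w.snd := rfl

theorem saddleGrad_sub_snd :
    (saddleGrad gx gy z - saddleGrad gx gy w).snd = gy w.fst w.snd - gy z.fst z.snd := by
  rw [WithLp.sub_snd]
  exact neg_sub_neg _ _

variable {gx gy}

theorem norm_saddleGrad_sub_sq_le {L : ℝ}
    (hLx : ∀ x₁ y₁ x₂ y₂, ‖gx x₁ y₁ - gx x₂ y₂‖ ≤ L * (‖x₁ - x₂‖ + ‖y₁ - y₂‖))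
    (hLy : ∀ x₁ y₁ x₂ y₂, ‖gy x₁ y₁ - gy x₂ y₂‖ ≤ L * (‖x₁ - x₂‖ + ‖y₁ - y₂‖)) :
    ‖saddleGrad gx gy z - saddleGrad gx gy w‖ ^ 2 ≤ 4 * L ^ 2 * ‖z - w‖ ^ 2 := by
  rw [WithLp.prod_norm_sq_eq_of_L2, WithLp.prod_norm_sq_eq_of_L2, saddleGrad_sub_fst,
    saddleGrad_sub_snd, WithLp.sub_fst, WithLp.sub_snd, norm_sub_rev (gy _ _)]
  exact sq_add_sq_le_of_le_mul_add (norm_nonneg _) (norm_nonneg _) (hLx _ _ _ _) (hLy _ _ _ _)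

variable [InnerProductSpace ℝ E] [InnerProductSpace ℝ F]

theorem saddleGrad_strongMono (f : E → F → ℝ) {μ : ℝ}
    (hSC : ∀ x₁ x₂ y, f x₁ y + ⟪gx x₁ y, x₂ - x₁⟫ + μ / 2 * ‖x₂ - x₁‖ ^ 2 ≤ f x₂ y)
    (hSCC : ∀ x y₁ y₂, f x y₂ ≤ f x y₁ + ⟪gy x y₁, y₂ - y₁⟫ - μ / 2 * ‖y₂ - y₁‖ ^ 2) :
    μ * ‖z - w‖ ^ 2 ≤ ⟪saddleGrad gx gy z - saddleGrad gx gy w, z - w⟫ := by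
  rw [WithLp.prod_norm_sq_eq_of_L2, WithLp.prod_inner_apply, WithLp.ofLp_fst, WithLp.ofLp_fst,
    WithLp.ofLp_snd, WithLp.ofLp_snd, saddleGrad_sub_fst, saddleGrad_sub_snd, WithLp.sub_fst,
    WithLp.sub_snd, inner_sub_left, inner_sub_left]
  have h₁ := hSC z.fst w.fst z.snd
  have h₂ := hSC w.fst z.fst w.snd
  have h₃ := hSCC z.fst z.snd w.snd
  have h₄ := hSCC w.fst w.snd z.snd
  rw [← neg_sub z.fst, inner_neg_right, norm_neg] at h₁
  rw [← neg_sub z.snd, inner_neg_right, norm_neg] at h₃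
  linarith

end Saddle

theorem Phi_cocoercive_general
    {m n : ℕ}
    (f : EuclideanSpace ℝ (Fin m) → EuclideanSpace ℝ (Fin n) → ℝ)
    (gx : EuclideanSpace ℝ (Fin m) → EuclideanSpace ℝ (Fin n) → EuclideanSpace ℝ (Fin m))
    (gy : EuclideanSpace ℝ (Fin m) → EuclideanSpace ℝ (Fin n) → EuclideanSpace ℝ (Fin n))
    (μ L : ℝ) (hμ : 0 < μ)
    -- Assumption 3: μ-strong convexity in x and μ-strong concavity in y
    (hSC : ∀ x₁ x₂ y, f x₁ y + inner ℝ (gx x₁ y) (x₂ - x₁) + μ / 2 * ‖x₂ - x₁‖ ^ 2 ≤ f x₂ y)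
    (hSCC : ∀ x y₁ y₂, f x y₂ ≤ f x y₁ + inner ℝ (gy x y₁) (y₂ - y₁) - μ / 2 * ‖y₂ - y₁‖ ^ 2)
    -- Assumption 2: L-Lipschitz partial gradients
    (hLx : ∀ x₁ y₁ x₂ y₂, ‖gx x₁ y₁ - gx x₂ y₂‖ ≤ L * (‖x₁ - x₂‖ + ‖y₁ - y₂‖))
    (hLy : ∀ x₁ y₁ x₂ y₂, ‖gy x₁ y₁ - gy x₂ y₂‖ ≤ L * (‖x₁ - x₂‖ + ‖y₁ - y₂‖))
    (Φ : WithLp 2 (EuclideanSpace ℝ (Fin m) × EuclideanSpace ℝ (Fin n)) →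
         WithLp 2 (EuclideanSpace ℝ (Fin m) × EuclideanSpace ℝ (Fin n)))
    (hΦ : ∀ z, Φ z =
      (WithLp.equiv 2 (EuclideanSpace ℝ (Fin m) × EuclideanSpace ℝ (Fin n))).symm
        (gx (WithLp.equiv 2 _ z).1 (WithLp.equiv 2 _ z).2,
         -(gy (WithLp.equiv 2 _ z).1 (WithLp.equiv 2 _ z).2))) :
    ∀ z zhat,
      μ / (4 * L ^ 2) * ‖Φ z - Φ zhat‖ ^ 2 ≤ inner ℝ (Φ z - Φ zhat) (z - zhat) := by
  obtain rfl : Φ = saddleGrad gx gy := funext hΦ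
  intro z zhat
  exact div_mul_norm_sq_le_inner hμ.le (by positivity)
    (saddleGrad_strongMono z zhat f hSC hSCC) (norm_saddleGrad_sub_sq_le z zhat hLx hLy)

/-- Lemma 9: cocoercivity-type inequality
`⟨Φ(z)−Φ(ẑ), z−ẑ⟩ ≥ (μ/(4L²))‖Φ(z)−Φ(ẑ)‖²` for strongly convex-strongly concave `f`. -/
theorem Phi_cocoercive
    {m n : ℕ}
    (f : EuclideanSpace ℝ (Fin m) → EuclideanSpace ℝ (Fin n) → ℝ)
    (gx : EuclideanSpace ℝ (Fin m) → EuclideanSpace ℝ (Fin n) → EuclideanSpace ℝ (Fin m))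
    (gy : EuclideanSpace ℝ (Fin m) → EuclideanSpace ℝ (Fin n) → EuclideanSpace ℝ (Fin n))
    (hgx : ∀ x y, HasGradientAt (fun x' => f x' y) (gx x y) x)
    (hgy : ∀ x y, HasGradientAt (fun y' => f x y') (gy x y) y)
    (μ L : ℝ) (hμ : 0 < μ) (hLμ : μ ≤ L)
    -- Assumption 3: μ-strong convexity in x and μ-strong concavity in y
    (hSC : ∀ x₁ x₂ y, f x₁ y + inner ℝ (gx x₁ y) (x₂ - x₁) + μ / 2 * ‖x₂ - x₁‖ ^ 2 ≤ f x₂ y)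
    (hSCC : ∀ x y₁ y₂, f x y₂ ≤ f x y₁ + inner ℝ (gy x y₁) (y₂ - y₁) - μ / 2 * ‖y₂ - y₁‖ ^ 2)
    -- Assumption 2: L-Lipschitz partial gradients
    (hLx : ∀ x₁ y₁ x₂ y₂, ‖gx x₁ y₁ - gx x₂ y₂‖ ≤ L * (‖x₁ - x₂‖ + ‖y₁ - y₂‖))
    (hLy : ∀ x₁ y₁ x₂ y₂, ‖gy x₁ y₁ - gy x₂ y₂‖ ≤ L * (‖x₁ - x₂‖ + ‖y₁ - y₂‖))
    (Φ : WithLp 2 (EuclideanSpace ℝ (Fin m) × EuclideanSpace ℝ (Fin n)) →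
         WithLp 2 (EuclideanSpace ℝ (Fin m) × EuclideanSpace ℝ (Fin n)))
    (hΦ : ∀ z, Φ z =
      (WithLp.equiv 2 (EuclideanSpace ℝ (Fin m) × EuclideanSpace ℝ (Fin n))).symm
        (gx (WithLp.equiv 2 _ z).1 (WithLp.equiv 2 _ z).2,
         -(gy (WithLp.equiv 2 _ z).1 (WithLp.equiv 2 _ z).2))) :
    ∀ z zhat,
      μ / (4 * L ^ 2) * ‖Φ z - Φ zhat‖ ^ 2 ≤ inner ℝ (Φ z - Φ zhat) (z - zhat) :=
  Phi_cocoercive_general f gx gy μ L hμ hSC hSCC hLx hLy Φ hΦ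
end

section
/- For delayed gradient descent-ascent z_{k+1} = z_k − αΦ(z_{k−τ_k}) applied to a μ-strongly convex-strongly concave f with L-Lipschitz partial gradients and delays bounded by τ_max, the error e_k = Φ(z_k) − Φ(z_{k−τ_k}) satisfies ‖e_k‖ ≤ 2α L τ_max (4L²/μ + 4L) · max_{k−2τ_max ≤ t ≤ k} ‖z_t − z*‖, where z* is the saddle point. -/
/-!
The field `Φ = (∇ₓf, -∇ᵧf)` is `4L`-Lipschitz and vanishes at the saddle point, so
`‖Φ(z_t)‖ ≤ 4L r_t`. Between `z_{k-τ_k}` and `z_k` there are at most `τ_max` steps, each of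
length `α ‖Φ(z_{j-τ_j})‖` with `k - 2τ_max ≤ j - τ_j ≤ k`; hence
`‖e_k‖ ≤ 4L · τ_max · α · 4L · max r_t`, and `16 L² ≤ 2L (4L²/μ + 4L)` because `μ ≤ L`.
-/

open Finset

theorem IsLocalExtr.hasGradientAt_eq_zero {F : Type*} [NormedAddCommGroup F]
    [InnerProductSpace ℝ F] [CompleteSpace F] {f : F → ℝ} {g x : F} (hf : IsLocalExtr f x)
    (hg : HasGradientAt f g x) : g = 0 := by
  simpa using congrArg (InnerProductSpace.toDual ℝ F).symm (hf.hasFDerivAt_eq_zero hg.hasFDerivAt)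

theorem WithLp.norm_toLp_prod_le (p : ENNReal) [Fact (1 ≤ p)] {α β : Type*}
    [SeminormedAddCommGroup α] [SeminormedAddCommGroup β] (a : α) (b : β) :
    ‖toLp p (a, b)‖ ≤ ‖a‖ + ‖b‖ := by
  have hsplit : toLp p (a, b) = toLp p (a, (0 : β)) + toLp p ((0 : α), b) := by
    rw [← toLp_add, Prod.mk_add_mk, add_zero, zero_add]
  rw [hsplit, ← norm_toLp_fst p α β a, ← norm_toLp_snd p α β b]
  exact norm_add_le _ _

section SaddleField

variable {E F : Type*} [SeminormedAddCommGroup E] [SeminormedAddCommGroup F]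

def saddleField (gx : E → F → E) (gy : E → F → F) (w : WithLp 2 (E × F)) : WithLp 2 (E × F) :=
  WithLp.toLp 2 (gx w.fst w.snd, -gy w.fst w.snd)

theorem saddleField_sub_le {gx : E → F → E} {gy : E → F → F} {L : ℝ} (hL : 0 ≤ L)
    (hLx : ∀ x₁ y₁ x₂ y₂, ‖gx x₁ y₁ - gx x₂ y₂‖ ≤ L * (‖x₁ - x₂‖ + ‖y₁ - y₂‖))
    (hLy : ∀ x₁ y₁ x₂ y₂, ‖gy x₁ y₁ - gy x₂ y₂‖ ≤ L * (‖x₁ - x₂‖ + ‖y₁ - y₂‖))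
    (w₁ w₂ : WithLp 2 (E × F)) :
    ‖saddleField gx gy w₁ - saddleField gx gy w₂‖ ≤ 4 * L * ‖w₁ - w₂‖ := by
  have hfst : ‖w₁.fst - w₂.fst‖ ≤ ‖w₁ - w₂‖ := WithLp.norm_fst_le _ (w₁ - w₂)
  have hsnd : ‖w₁.snd - w₂.snd‖ ≤ ‖w₁ - w₂‖ := WithLp.norm_snd_le _ (w₁ - w₂)
  calc ‖saddleField gx gy w₁ - saddleField gx gy w₂‖
      ≤ ‖gx w₁.fst w₁.snd - gx w₂.fst w₂.snd‖ + ‖gy w₁.fst w₁.snd - gy w₂.fst w₂.snd‖ := by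
        rw [saddleField, saddleField, ← WithLp.toLp_sub, Prod.mk_sub_mk, neg_sub_neg,
          norm_sub_rev (gy _ _)]
        exact WithLp.norm_toLp_prod_le 2 _ _
    _ ≤ L * (‖w₁.fst - w₂.fst‖ + ‖w₁.snd - w₂.snd‖) +
          L * (‖w₁.fst - w₂.fst‖ + ‖w₁.snd - w₂.snd‖) := add_le_add (hLx ..) (hLy ..)
    _ ≤ L * (‖w₁ - w₂‖ + ‖w₁ - w₂‖) + L * (‖w₁ - w₂‖ + ‖w₁ - w₂‖) := by gcongr
    _ = 4 * L * ‖w₁ - w₂‖ := by ring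

end SaddleField

theorem norm_sub_le_of_delayed_step {E : Type*} [SeminormedAddCommGroup E] [NormedSpace ℝ E]
    {Φ : E → E} {K α M : ℝ} {zs : E} {z : ℕ → E} {d : ℕ → ℕ} {a k : ℕ}
    (hK : 0 ≤ K) (hα : 0 ≤ α) (hΦ : ∀ u v, ‖Φ u - Φ v‖ ≤ K * ‖u - v‖) (hzs : Φ zs = 0)
    (hak : a ≤ k) (hstep : ∀ j, a ≤ j → j < k → z (j + 1) = z j - α • Φ (z (d j)))
    (hM : ∀ j, a ≤ j → j < k → ‖z (d j) - zs‖ ≤ M) :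
    ‖Φ (z k) - Φ (z a)‖ ≤ (k - a : ℕ) * α * K ^ 2 * M := by
  have hmove : ∀ {j}, a ≤ j → j < k → dist (z j) (z (j + 1)) ≤ α * (K * M) := by
    intro j haj hjk
    rw [dist_eq_norm, hstep j haj hjk, sub_sub_cancel, norm_smul, Real.norm_of_nonneg hα]
    gcongr
    calc ‖Φ (z (d j))‖ = ‖Φ (z (d j)) - Φ zs‖ := by rw [hzs, sub_zero]
      _ ≤ K * ‖z (d j) - zs‖ := hΦ _ _
      _ ≤ K * M := by gcongr; exact hM j haj hjk
  have hdrift : ‖z k - z a‖ ≤ (k - a : ℕ) * (α * (K * M)) := by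
    rw [← dist_eq_norm, dist_comm]
    simpa [Nat.card_Ico] using dist_le_Ico_sum_of_dist_le hak hmove
  calc ‖Φ (z k) - Φ (z a)‖ ≤ K * ‖z k - z a‖ := hΦ _ _
    _ ≤ K * ((k - a : ℕ) * (α * (K * M))) := by gcongr
    _ = (k - a : ℕ) * α * K ^ 2 * M := by ring

theorem DGDA_scsc_error_bound_general
    {m n : ℕ}
    (f : EuclideanSpace ℝ (Fin m) → EuclideanSpace ℝ (Fin n) → ℝ)
    (gx : EuclideanSpace ℝ (Fin m) → EuclideanSpace ℝ (Fin n) → EuclideanSpace ℝ (Fin m))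
    (gy : EuclideanSpace ℝ (Fin m) → EuclideanSpace ℝ (Fin n) → EuclideanSpace ℝ (Fin n))
    (hgx : ∀ x y, HasGradientAt (fun x' => f x' y) (gx x y) x)
    (hgy : ∀ x y, HasGradientAt (fun y' => f x y') (gy x y) y)
    (μ L : ℝ) (hμ : 0 < μ) (hLμ : μ ≤ L)
    (hLx : ∀ x₁ y₁ x₂ y₂, ‖gx x₁ y₁ - gx x₂ y₂‖ ≤ L * (‖x₁ - x₂‖ + ‖y₁ - y₂‖))
    (hLy : ∀ x₁ y₁ x₂ y₂, ‖gy x₁ y₁ - gy x₂ y₂‖ ≤ L * (‖x₁ - x₂‖ + ‖y₁ - y₂‖))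
    -- saddle point
    (xstar : EuclideanSpace ℝ (Fin m)) (ystar : EuclideanSpace ℝ (Fin n))
    (hsaddle : ∀ x y, f xstar y ≤ f xstar ystar ∧ f xstar ystar ≤ f x ystar)
    (zstar : WithLp 2 (EuclideanSpace ℝ (Fin m) × EuclideanSpace ℝ (Fin n)))
    (hzstar : zstar = (WithLp.equiv 2 _).symm (xstar, ystar))
    -- the operator Φ
    (Φ : WithLp 2 (EuclideanSpace ℝ (Fin m) × EuclideanSpace ℝ (Fin n)) →
         WithLp 2 (EuclideanSpace ℝ (Fin m) × EuclideanSpace ℝ (Fin n)))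
    (hΦ : ∀ z, Φ z =
      (WithLp.equiv 2 (EuclideanSpace ℝ (Fin m) × EuclideanSpace ℝ (Fin n))).symm
        (gx (WithLp.equiv 2 _ z).1 (WithLp.equiv 2 _ z).2,
         -(gy (WithLp.equiv 2 _ z).1 (WithLp.equiv 2 _ z).2)))
    -- step size, delays, iterates (indices below 1 refer to z 1)
    (α : ℝ) (hα : 0 < α)
    (τ : ℕ → ℕ) (τmax : ℕ) (hτ : ∀ k, τ k ≤ τmax)
    (z : ℕ → WithLp 2 (EuclideanSpace ℝ (Fin m) × EuclideanSpace ℝ (Fin n)))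
    (hstep : ∀ k, 1 ≤ k → z (k + 1) = z k - α • Φ (z (max (k - τ k) 1))) :
    ∀ k, 1 ≤ k →
      ‖Φ (z k) - Φ (z (max (k - τ k) 1))‖ ≤
        2 * α * (L * τmax * (4 * L ^ 2 / μ + 4 * L)) *
          (Finset.Icc (k - 2 * τmax) k).sup'
            (Finset.nonempty_Icc.2 (Nat.sub_le _ _))
            (fun t => ‖z (max t 1) - zstar‖) := by
  intro k hk
  have hL : 0 ≤ L := hμ.le.trans hLμ
  have hgx0 : gx xstar ystar = 0 := IsLocalExtr.hasGradientAt_eq_zero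
    (Or.inl (.of_forall fun x => (hsaddle x ystar).2)) (hgx xstar ystar)
  have hgy0 : gy xstar ystar = 0 := IsLocalExtr.hasGradientAt_eq_zero
    (Or.inr (.of_forall fun y => (hsaddle xstar y).1)) (hgy xstar ystar)
  have hΦ_eq : Φ = saddleField gx gy := funext hΦ
  have hΦ0 : Φ zstar = 0 := by simp [hΦ_eq, hzstar, saddleField, hgx0, hgy0]
  set M := (Icc (k - 2 * τmax) k).sup' (nonempty_Icc.2 (Nat.sub_le _ _))
    (fun t => ‖z (max t 1) - zstar‖)
  have hdelayed : ∀ j, max (k - τ k) 1 ≤ j → j < k → ‖z (max (j - τ j) 1) - zstar‖ ≤ M :=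
    fun j haj hjk => le_sup' (fun t => ‖z (max t 1) - zstar‖)
      (mem_Icc.2 ⟨by have := hτ j; have := hτ k; omega, by omega⟩)
  have hdrift := norm_sub_le_of_delayed_step (by positivity) hα.le
    (hΦ_eq ▸ saddleField_sub_le hL hLx hLy) hΦ0 (by omega)
    (fun j haj _ => hstep j (by omega)) hdelayed
  have hM : 0 ≤ M := (norm_nonneg _).trans (le_sup' (fun t => ‖z (max t 1) - zstar‖)
    (mem_Icc.2 ⟨Nat.sub_le _ _, le_rfl⟩))
  have hsteps : ((k - max (k - τ k) 1 : ℕ) : ℝ) ≤ τmax := by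
    have := hτ k; exact_mod_cast (by omega : k - max (k - τ k) 1 ≤ τmax)
  have hconst : (4 * L) ^ 2 ≤ 2 * (L * (4 * L ^ 2 / μ + 4 * L)) := by
    have : L ≤ L ^ 2 / μ := by
      rw [le_div_iff₀ hμ, sq]; exact mul_le_mul_of_nonneg_left hLμ hL
    rw [mul_div_assoc]
    nlinarith [mul_le_mul_of_nonneg_left this hL]
  calc ‖Φ (z k) - Φ (z (max (k - τ k) 1))‖
      ≤ (k - max (k - τ k) 1 : ℕ) * α * (4 * L) ^ 2 * M := hdrift
    _ ≤ τmax * α * (2 * (L * (4 * L ^ 2 / μ + 4 * L))) * M := by gcongr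
    _ = 2 * α * (L * τmax * (4 * L ^ 2 / μ + 4 * L)) * M := by ring

/-- Lemma 10: error bound for delayed gradient descent-ascent on
strongly convex-strongly concave functions:
`‖e_k‖ ≤ 2αLτmax(4L²/μ + 4L)·max_{k−2τmax ≤ t ≤ k} ‖z_t − z*‖`. -/
theorem DGDA_scsc_error_bound
    {m n : ℕ}
    (f : EuclideanSpace ℝ (Fin m) → EuclideanSpace ℝ (Fin n) → ℝ)
    (gx : EuclideanSpace ℝ (Fin m) → EuclideanSpace ℝ (Fin n) → EuclideanSpace ℝ (Fin m))
    (gy : EuclideanSpace ℝ (Fin m) → EuclideanSpace ℝ (Fin n) → EuclideanSpace ℝ (Fin n))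
    (hgx : ∀ x y, HasGradientAt (fun x' => f x' y) (gx x y) x)
    (hgy : ∀ x y, HasGradientAt (fun y' => f x y') (gy x y) y)
    (μ L : ℝ) (hμ : 0 < μ) (hLμ : μ ≤ L)
    (hSC : ∀ x₁ x₂ y, f x₁ y + inner ℝ (gx x₁ y) (x₂ - x₁) + μ / 2 * ‖x₂ - x₁‖ ^ 2 ≤ f x₂ y)
    (hSCC : ∀ x y₁ y₂, f x y₂ ≤ f x y₁ + inner ℝ (gy x y₁) (y₂ - y₁) - μ / 2 * ‖y₂ - y₁‖ ^ 2)
    (hLx : ∀ x₁ y₁ x₂ y₂, ‖gx x₁ y₁ - gx x₂ y₂‖ ≤ L * (‖x₁ - x₂‖ + ‖y₁ - y₂‖))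
    (hLy : ∀ x₁ y₁ x₂ y₂, ‖gy x₁ y₁ - gy x₂ y₂‖ ≤ L * (‖x₁ - x₂‖ + ‖y₁ - y₂‖))
    -- saddle point
    (xstar : EuclideanSpace ℝ (Fin m)) (ystar : EuclideanSpace ℝ (Fin n))
    (hsaddle : ∀ x y, f xstar y ≤ f xstar ystar ∧ f xstar ystar ≤ f x ystar)
    (zstar : WithLp 2 (EuclideanSpace ℝ (Fin m) × EuclideanSpace ℝ (Fin n)))
    (hzstar : zstar = (WithLp.equiv 2 _).symm (xstar, ystar))
    -- the operator Φ
    (Φ : WithLp 2 (EuclideanSpace ℝ (Fin m) × EuclideanSpace ℝ (Fin n)) →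
         WithLp 2 (EuclideanSpace ℝ (Fin m) × EuclideanSpace ℝ (Fin n)))
    (hΦ : ∀ z, Φ z =
      (WithLp.equiv 2 (EuclideanSpace ℝ (Fin m) × EuclideanSpace ℝ (Fin n))).symm
        (gx (WithLp.equiv 2 _ z).1 (WithLp.equiv 2 _ z).2,
         -(gy (WithLp.equiv 2 _ z).1 (WithLp.equiv 2 _ z).2)))
    -- step size, delays, iterates (indices below 1 refer to z 1)
    (α : ℝ) (hα : 0 < α)
    (τ : ℕ → ℕ) (τmax : ℕ) (hτmax : 1 ≤ τmax) (hτ : ∀ k, τ k ≤ τmax)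
    (z : ℕ → WithLp 2 (EuclideanSpace ℝ (Fin m) × EuclideanSpace ℝ (Fin n)))
    (hstep : ∀ k, 1 ≤ k → z (k + 1) = z k - α • Φ (z (max (k - τ k) 1))) :
    ∀ k, 1 ≤ k →
      ‖Φ (z k) - Φ (z (max (k - τ k) 1))‖ ≤
        2 * α * (L * τmax * (4 * L ^ 2 / μ + 4 * L)) *
          (Finset.Icc (k - 2 * τmax) k).sup'
            (Finset.nonempty_Icc.2 (Nat.sub_le _ _))
            (fun t => ‖z (max t 1) - zstar‖) :=
  DGDA_scsc_error_bound_general f gx gy hgx hgy μ L hμ hLμ hLx hLy xstar ystar hsaddle zstar hzstar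
    Φ hΦ α hα τ τmax hτ z hstep
end

section
/- Let (V_k)_{k≥0} be nonnegative reals satisfying V_{k+1} ≤ p V_k + q · max_{k−d(k) ≤ ℓ ≤ k} V_ℓ for all k ≥ 0, where p, q ≥ 0, p + q < 1, and 0 ≤ d(k) ≤ d_max. Then V_k ≤ r^k V_0 for all k, where r = (p+q)^{1/(1+d_max)}. -/
/-- Lemma 11, from Gürbüzbalaban et al.: a nonnegative sequence
satisfying `V_{k+1} ≤ p V_k + q · max_{k−d(k) ≤ ℓ ≤ k} V_ℓ` with `p + q < 1`
decays linearly: `V_k ≤ r^k V_0` with `r = (p+q)^{1/(1+d_max)}`. -/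
theorem delayed_recursion_linear_decay
    (p q : ℝ) (hp : 0 ≤ p) (hq : 0 ≤ q) (hpq : p + q < 1)
    (dmax : ℕ) (hdmax : 1 ≤ dmax)
    (d : ℕ → ℕ) (hd : ∀ k, d k ≤ dmax)
    (V : ℕ → ℝ) (hV : ∀ k, 0 ≤ V k)
    (hrec : ∀ k, V (k + 1) ≤ p * V k +
      q * (Finset.Icc (k - d k) k).sup' (Finset.nonempty_Icc.2 (Nat.sub_le _ _)) V)
    (r : ℝ) (hr : r = (p + q) ^ ((1 : ℝ) / (1 + dmax))) :
    ∀ k, V k ≤ r ^ k * V 0 := by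
  have hpq0 : 0 ≤ p + q := by positivity
  have hden : (1 : ℝ) + dmax ≠ 0 := by positivity
  have hr0 : 0 ≤ r := by rw [hr]; positivity
  have hr1 : r ≤ 1 := by
    rw [hr]; exact Real.rpow_le_one hpq0 hpq.le (by positivity)
  have hrpow : r ^ (dmax + 1) = p + q := by
    rw [hr, ← Real.rpow_natCast ((p + q) ^ ((1 : ℝ) / (1 + dmax))) (dmax + 1),
      ← Real.rpow_mul hpq0]
    rw [show (1 : ℝ) / (1 + dmax) * ((dmax + 1 : ℕ) : ℝ) = 1 by push_cast; field_simp; ring]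
    exact Real.rpow_one _
  intro k
  induction k using Nat.strong_induction_on with
  | _ k ih =>
    match k with
    | 0 => simp
    | Nat.succ n =>
      have hsup : (Finset.Icc (n - d n) n).sup'
          (Finset.nonempty_Icc.2 (Nat.sub_le _ _)) V ≤ r ^ (n - d n) * V 0 := by
        apply Finset.sup'_le
        intro ℓ hℓ
        obtain ⟨h1, h2⟩ := Finset.mem_Icc.mp hℓ
        calc V ℓ ≤ r ^ ℓ * V 0 := ih ℓ (by omega)
          _ ≤ r ^ (n - d n) * V 0 :=
            mul_le_mul_of_nonneg_right (pow_le_pow_of_le_one hr0 hr1 h1) (hV 0)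
      have hVn := ih n (by omega)
      calc V (n + 1) ≤ p * V n +
            q * (Finset.Icc (n - d n) n).sup'
              (Finset.nonempty_Icc.2 (Nat.sub_le _ _)) V := hrec n
        _ ≤ p * (r ^ n * V 0) + q * (r ^ (n - d n) * V 0) := by
            gcongr
        _ = (p * r ^ n + q * r ^ (n - d n)) * V 0 := by ring
        _ ≤ r ^ (n + 1) * V 0 := by
            apply mul_le_mul_of_nonneg_right _ (hV 0)
            have h1 : p * r ^ n ≤ p * r ^ (n - d n) :=
              mul_le_mul_of_nonneg_left
                (pow_le_pow_of_le_one hr0 hr1 (Nat.sub_le n (d n))) hp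
            have h2 : (p + q) * r ^ (n - d n) = r ^ (dmax + 1 + (n - d n)) := by
              rw [pow_add, hrpow]
            have h3 : r ^ (dmax + 1 + (n - d n)) ≤ r ^ (n + 1) := by
              apply pow_le_pow_of_le_one hr0 hr1
              have := hd n; omega
            nlinarith [pow_nonneg hr0 (n - d n)]
end
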